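/- arXiv:2502.04962 — 7 statements merged into one kernel-verified Lean document; each statement's English description precedes it below -/
import Mathlib

section
/- For all z in the upper half-plane ℍ, the principal logarithm satisfies log z = ∫_{-∞}^{0} (1/(t−z) − t/(t²+1)) dt. In particular the principal logarithm is a Nevanlinna–Pick function. -/
/-!
For `z` off the real axis, `F t = log (z - t) - log (t ^ 2 + 1) / 2` is a primitive of the
integrand on all of `ℝ`. Factoring `z - t = (-t) * (1 - z / t)` shows `F t → 0` as
`t → -∞`, so the integral over `(-∞, 0)` is `F 0 = log z`.
On `ℍ`, `Im (log z) = arg z ∈ (0, π)`.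
-/

open MeasureTheory Set Complex Filter Topology

namespace Complex

variable {z : ℂ}

lemma ofReal_sq_add_one_ne_zero (t : ℝ) : (t : ℂ) ^ 2 + 1 ≠ 0 := by
  norm_cast; positivity

lemma sub_ofReal_mem_slitPlane (hz : z.im ≠ 0) (t : ℝ) : z - t ∈ slitPlane :=
  mem_slitPlane_iff.2 (Or.inr (by simpa using hz))

noncomputable def nevanlinnaKernel (z : ℂ) (t : ℝ) : ℂ :=
  ((t : ℂ) - z)⁻¹ - (t : ℂ) / ((t : ℂ) ^ 2 + 1)

noncomputable def nevanlinnaKernelPrimitive (z : ℂ) (t : ℝ) : ℂ :=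
  log (z - t) - (Real.log (t ^ 2 + 1) / 2 : ℝ)

lemma continuous_nevanlinnaKernel (hz : z.im ≠ 0) : Continuous (nevanlinnaKernel z) := by
  have hne (t : ℝ) : (t : ℂ) - z ≠ 0 := by
    rw [← neg_ne_zero, neg_sub]; exact slitPlane_ne_zero (sub_ofReal_mem_slitPlane hz t)
  unfold nevanlinnaKernel
  fun_prop (disch := first | exact hne | exact ofReal_sq_add_one_ne_zero)

lemma hasDerivAt_nevanlinnaKernelPrimitive (hz : z.im ≠ 0) (t : ℝ) :
    HasDerivAt (nevanlinnaKernelPrimitive z) (nevanlinnaKernel z t) t := by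
  have hlog : HasDerivAt (fun s : ℝ => log (z - s)) (-(z - t)⁻¹) t := by
    simpa using ((hasDerivAt_log (sub_ofReal_mem_slitPlane hz t)).comp (t : ℂ)
      ((hasDerivAt_id _).const_sub z)).comp_ofReal
  have hsq : HasDerivAt (fun s : ℝ => Real.log (s ^ 2 + 1) / 2) (t / (t ^ 2 + 1)) t := by
    refine ((((hasDerivAt_pow 2 t).add_const 1).log (by positivity)).div_const 2).congr_deriv ?_
    field_simp
    ring
  refine (hlog.sub hsq.ofReal_comp).congr_deriv ?_
  rw [nevanlinnaKernel, ← inv_neg, neg_sub]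
  push_cast
  ring

lemma norm_nevanlinnaKernel_le {t : ℝ} (ht₁ : t ≤ -1) (ht₂ : t ≤ -(2 * ‖z‖)) :
    ‖nevanlinnaKernel z t‖ ≤ 2 * (‖z‖ + 1) * (1 + t ^ 2)⁻¹ := by
  have hnorm_t : ‖(t : ℂ)‖ = -t := by rw [norm_real, Real.norm_of_nonpos (by linarith)]
  have hdist : -t / 2 ≤ ‖(t : ℂ) - z‖ := by
    linarith [norm_sub_norm_le (t : ℂ) z]
  have hne : (t : ℂ) - z ≠ 0 := norm_pos_iff.1 (by linarith)
  have hnum : ‖z * t + 1‖ ≤ (‖z‖ + 1) * -t := by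
    calc ‖z * t + 1‖ ≤ ‖z * t‖ + ‖(1 : ℂ)‖ := norm_add_le _ _
      _ = ‖z‖ * -t + 1 := by rw [norm_mul, hnorm_t, norm_one]
      _ ≤ (‖z‖ + 1) * -t := by linarith
  have hden : ‖(t : ℂ) ^ 2 + 1‖ = t ^ 2 + 1 := by
    norm_cast; exact Real.norm_of_nonneg (by positivity)
  have hkernel : nevanlinnaKernel z t = (z * t + 1) / (((t : ℂ) - z) * ((t : ℂ) ^ 2 + 1)) := by
    rw [nevanlinnaKernel]
    field_simp [ofReal_sq_add_one_ne_zero]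
    ring
  calc ‖nevanlinnaKernel z t‖ = ‖z * t + 1‖ / (‖(t : ℂ) - z‖ * (t ^ 2 + 1)) := by
        rw [hkernel, norm_div, norm_mul, hden]
    _ ≤ (‖z‖ + 1) * -t / (-t / 2 * (t ^ 2 + 1)) := by
        have : 0 < -t := by linarith
        gcongr
    _ = 2 * (‖z‖ + 1) * (1 + t ^ 2)⁻¹ := by
        have : t ≠ 0 := by linarith
        field_simp
        ring

lemma integrableOn_Iic_nevanlinnaKernel (hz : z.im ≠ 0) :
    IntegrableOn (nevanlinnaKernel z) (Iic 0) := by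
  set T := max 1 (2 * ‖z‖)
  have htail : IntegrableOn (nevanlinnaKernel z) (Iic (-T)) := by
    refine ((integrable_inv_one_add_sq.const_mul (2 * (‖z‖ + 1))).integrableOn).mono'
      (continuous_nevanlinnaKernel hz).aestronglyMeasurable.restrict ?_
    refine (ae_restrict_iff' measurableSet_Iic).2 (Eventually.of_forall fun t ht => ?_)
    exact norm_nevanlinnaKernel_le (ht.trans (neg_le_neg (le_max_left _ _)))
      (ht.trans (neg_le_neg (le_max_right _ _)))
  rw [← Iic_union_Icc_eq_Iic (a := -T) (neg_nonpos.2 (zero_le_one.trans (le_max_left _ _)))]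
  exact htail.union (continuous_nevanlinnaKernel hz).integrableOn_Icc

lemma tendsto_log_sub_half_log_sq_add_one_atBot :
    Tendsto (fun t : ℝ => Real.log t - Real.log (t ^ 2 + 1) / 2) atBot (𝓝 0) := by
  have hcont : Tendsto (fun u : ℝ => -Real.log (1 + u ^ 2) / 2) (𝓝 0) (𝓝 0) := by
    have hpos (u : ℝ) : 1 + u ^ 2 ≠ 0 := by positivity
    simpa using ((continuous_const.add (continuous_pow 2)).log hpos).neg.div_const 2 |>.tendsto 0
  refine (hcont.comp tendsto_inv_atBot_zero).congr' ?_
  filter_upwards [eventually_lt_atBot 0] with t ht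
  have ht₀ : t ≠ 0 := ht.ne
  have hsplit : t ^ 2 + 1 = t ^ 2 * (1 + t⁻¹ ^ 2) := by field_simp
  simp only [Function.comp_apply]
  rw [hsplit, Real.log_mul (pow_ne_zero 2 ht₀) (by positivity), Real.log_pow]
  push_cast
  ring

lemma tendsto_nevanlinnaKernelPrimitive_atBot (z : ℂ) :
    Tendsto (nevanlinnaKernelPrimitive z) atBot (𝓝 0) := by
  have hu : Tendsto (fun t : ℝ => 1 - z * (t : ℂ)⁻¹) atBot (𝓝 1) := by
    simpa using tendsto_const_nhds.sub
      (tendsto_const_nhds.mul ((continuous_ofReal.tendsto 0).comp tendsto_inv_atBot_zero))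
  have hlim := (continuous_ofReal.tendsto 0).comp tendsto_log_sub_half_log_sq_add_one_atBot |>.add
    ((continuousAt_clog one_mem_slitPlane).tendsto.comp hu)
  rw [ofReal_zero, log_one, zero_add] at hlim
  refine hlim.congr' ?_
  filter_upwards [eventually_lt_atBot 0, hu.eventually_ne one_ne_zero] with t ht hne
  have hfactor : z - t = ((-t : ℝ) : ℂ) * (1 - z * (t : ℂ)⁻¹) := by
    have : (t : ℂ) ≠ 0 := ofReal_ne_zero.2 ht.ne
    push_cast
    field_simp
    ring
  simp only [Function.comp_apply, nevanlinnaKernelPrimitive]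
  rw [hfactor, log_ofReal_mul (by linarith) hne, Real.log_neg_eq_log]
  push_cast
  ring

lemma integral_Iio_nevanlinnaKernel (hz : z.im ≠ 0) :
    ∫ t in Iio 0, nevanlinnaKernel z t = log z := by
  rw [← integral_Iic_eq_integral_Iio, integral_Iic_of_hasDerivAt_of_tendsto'
    (fun t _ => hasDerivAt_nevanlinnaKernelPrimitive hz t) (integrableOn_Iic_nevanlinnaKernel hz)
    (tendsto_nevanlinnaKernelPrimitive_atBot z)]
  simp [nevanlinnaKernelPrimitive]

end Complex

/-- Integral representation of the principal logarithm in the upper half-plane;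
in particular `log` is a Nevanlinna–Pick function. -/
theorem log_nevanlinna_pick_representation :
    (∀ z : ℂ, 0 < z.im →
      Complex.log z = ∫ t in Set.Iio (0:ℝ),
        (((t : ℂ) - z)⁻¹ - (t : ℂ) / ((t : ℂ) ^ 2 + 1))) ∧
    DifferentiableOn ℂ Complex.log {z : ℂ | 0 < z.im} ∧
    (∀ z : ℂ, 0 < z.im → 0 ≤ (Complex.log z).im) :=
  ⟨fun _ hz => (integral_Iio_nevanlinnaKernel hz.ne').symm,
    fun _ hz => (differentiableAt_log (mem_slitPlane_iff.2 (Or.inr hz.ne'))).differentiableWithinAt,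
    fun _ hz => by rw [log_im]; exact arg_nonneg_iff.2 hz.le⟩
end

section
/- For all z ∈ ℂ \ (-∞,-1], the function f(z) = −log(1+z)/z (with f(0) = −1) satisfies f(z) = −π/4 + ∫_{-∞}^{-1} (1/(t−z) − t/(t²+1)) · (1/(−t)) dt, and f is a Nevanlinna–Pick function on the upper half-plane. -/
/-!
Substituting `t = -s`, the integrand becomes `(1 + s²)⁻¹ - (s (s + z))⁻¹` on `(1, ∞)`, which has
the explicit primitive `arctan s + z⁻¹ log (1 + z / s)`; evaluating it between `1` and `∞` gives
`π / 4 + f z`. For `Im z > 0` the imaginary part of the integrand is `s Im z / |s (s + z)|² ≥ 0`,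
so `Im f z ≥ 0`, and holomorphy on the upper half-plane is that of `log` on the slit plane.
-/

open MeasureTheory Set Complex

namespace NegLogOneAddDiv

open Filter Topology

variable {z : ℂ} {s : ℝ}

lemma one_add_mem_slitPlane_iff : 1 + z ∈ slitPlane ↔ ¬(z.im = 0 ∧ z.re ≤ -1) := by
  rw [mem_slitPlane_iff, add_re, one_re, add_im, one_im, zero_add, not_and_or, not_le,
    ← neg_lt_iff_pos_add', or_comm]

lemma one_add_div_ofReal_mem_slitPlane (hz : 1 + z ∈ slitPlane) (hs : 1 ≤ s) :
    1 + z / s ∈ slitPlane := by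
  have hs0 : (0 : ℝ) < s := one_pos.trans_le hs
  have key := starConvex_one_slitPlane hz (a := 1 - s⁻¹) (b := s⁻¹)
    (sub_nonneg.2 (inv_le_one_of_one_le₀ hs)) (inv_nonneg.2 hs0.le) (sub_add_cancel _ _)
  convert key using 1
  simp only [Complex.real_smul]
  push_cast
  field_simp
  ring

lemma ofReal_add_ne_zero (hz : 1 + z ∈ slitPlane) (hs : 1 ≤ s) : (s : ℂ) + z ≠ 0 := by
  have hs0 : (s : ℂ) ≠ 0 := ofReal_ne_zero.2 (one_pos.trans_le hs).ne'
  have : (s : ℂ) + z = s * (1 + z / s) := by field_simp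
  rw [this]
  exact mul_ne_zero hs0 (slitPlane_ne_zero (one_add_div_ofReal_mem_slitPlane hz hs))

noncomputable def logPrimitive (z : ℂ) (s : ℝ) : ℂ :=
  if z = 0 then (s : ℂ)⁻¹ else z⁻¹ * log (1 + z / s)

/-- The integrand of the representation after the substitution `t = -s`, in partial fractions. -/
noncomputable def integrand (z : ℂ) (s : ℝ) : ℂ :=
  ((1 + s ^ 2)⁻¹ : ℝ) - ((s : ℂ) * (s + z))⁻¹

lemma hasDerivAt_logPrimitive (hz : 1 + z ∈ slitPlane) (hs : 1 ≤ s) :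
    HasDerivAt (logPrimitive z) (-((s : ℂ) * (s + z))⁻¹) s := by
  have hs0 : (s : ℂ) ≠ 0 := ofReal_ne_zero.2 (one_pos.trans_le hs).ne'
  unfold logPrimitive
  by_cases hz0 : z = 0
  · simp only [hz0, if_true, add_zero]
    convert (hasDerivAt_inv hs0).comp_ofReal using 1
    ring
  · simp only [hz0, if_false]
    have hslit := one_add_div_ofReal_mem_slitPlane hz hs
    have hinner : HasDerivAt (fun w : ℂ => 1 + z / w) (-z / s ^ 2) s := by
      simpa [div_eq_mul_inv, neg_div] using ((hasDerivAt_inv hs0).const_mul z).const_add 1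
    convert ((hinner.clog hslit).const_mul z⁻¹).comp_ofReal using 1
    have := ofReal_add_ne_zero hz hs
    field_simp

lemma tendsto_logPrimitive_atTop (z : ℂ) : Tendsto (logPrimitive z) atTop (𝓝 0) := by
  have hinv : Tendsto (fun s : ℝ => (s : ℂ)⁻¹) atTop (𝓝 0) := by
    simpa [Function.comp_def] using (continuous_ofReal.tendsto 0).comp tendsto_inv_atTop_zero
  unfold logPrimitive
  split_ifs with hz0
  · exact hinv
  · have hlog : Tendsto (fun s : ℝ => log (1 + z / s)) atTop (𝓝 0) := by
      have := (continuousAt_clog one_mem_slitPlane).tendsto.comp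
        (by simpa using (hinv.const_mul z).const_add 1)
      simpa [Function.comp_def, div_eq_mul_inv] using this
    simpa using hlog.const_mul z⁻¹

lemma integrableOn_inv_mul_ofReal_add (hz : 1 + z ∈ slitPlane) :
    IntegrableOn (fun s : ℝ => ((s : ℂ) * (s + z))⁻¹) (Ioi 1) := by
  refine IntegrableOn.mono_set ?_ Ioi_subset_Ici_self
  have hcont : ContinuousOn (fun s : ℝ => ((s : ℂ) * (s + z))⁻¹) (Ici 1) := by
    refine ContinuousOn.inv₀ (by fun_prop) fun s hs => mul_ne_zero ?_ (ofReal_add_ne_zero hz hs)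
    exact ofReal_ne_zero.2 (one_pos.trans_le hs).ne'
  refine (hcont.locallyIntegrableOn measurableSet_Ici).integrableOn_of_isBigO_atTop
    (g := fun s : ℝ => s ^ (-2 : ℝ)) ?_ (integrableAtFilter_rpow_atTop_iff.2 (by norm_num))
  refine Asymptotics.IsBigO.of_bound 2 ?_
  filter_upwards [eventually_ge_atTop (max 1 (2 * ‖z‖))] with s hs
  have hs1 : 1 ≤ s := le_of_max_le_left hs
  have hs0 : 0 < s := one_pos.trans_le hs1
  have hsz : s / 2 ≤ ‖(s : ℂ) + z‖ := by
    have := norm_sub_norm_le (s : ℂ) (-z)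
    rw [norm_neg, sub_neg_eq_add, norm_real, Real.norm_of_nonneg hs0.le] at this
    linarith [le_of_max_le_right hs]
  rw [Real.norm_of_nonneg (by positivity), Real.rpow_neg hs0.le, Real.rpow_two, norm_inv, norm_mul,
    norm_real, Real.norm_of_nonneg hs0.le]
  calc (s * ‖(s : ℂ) + z‖)⁻¹ ≤ (s * (s / 2))⁻¹ := by gcongr
    _ = 2 * (s ^ 2)⁻¹ := by field_simp

lemma integrableOn_integrand (hz : 1 + z ∈ slitPlane) : IntegrableOn (integrand z) (Ioi 1) :=
  (integrable_inv_one_add_sq.ofReal.integrableOn).sub (integrableOn_inv_mul_ofReal_add hz)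

lemma integral_integrand (hz : 1 + z ∈ slitPlane) :
    ∫ s in Ioi 1, integrand z s = (Real.pi / 4 : ℝ) - logPrimitive z 1 := by
  have hderiv : ∀ s ∈ Ici (1 : ℝ),
      HasDerivAt (fun s => logPrimitive z s + (Real.arctan s : ℂ)) (integrand z s) s := by
    intro s hs
    refine ((hasDerivAt_logPrimitive hz hs).add
      (Real.hasDerivAt_arctan' s).ofReal_comp).congr_deriv ?_
    simp only [integrand]
    ring
  have hlim : Tendsto (fun s => logPrimitive z s + (Real.arctan s : ℂ)) atTop
      (𝓝 (0 + (Real.pi / 2 : ℝ))) :=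
    (tendsto_logPrimitive_atTop z).add <| (continuous_ofReal.tendsto _).comp <|
      tendsto_nhds_of_tendsto_nhdsWithin Real.tendsto_arctan_atTop
  rw [integral_Ioi_of_hasDerivAt_of_tendsto' hderiv (integrableOn_integrand hz) hlim,
    Real.arctan_one]
  push_cast
  ring

lemma integral_Iio_neg_one_eq (z : ℂ) :
    ∫ t in Iio (-1 : ℝ), (((t : ℂ) - z)⁻¹ - (t : ℂ) / ((t : ℂ) ^ 2 + 1)) * (-(t : ℂ))⁻¹ =
      ∫ s in Ioi 1, integrand z s := by
  rw [← integral_Iic_eq_integral_Iio, ← integral_comp_neg_Ioi]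
  refine setIntegral_congr_fun measurableSet_Ioi fun s (hs : 1 < s) => ?_
  have hs0 : (s : ℂ) ≠ 0 := ofReal_ne_zero.2 (one_pos.trans hs).ne'
  have hsq : (1 : ℂ) + s ^ 2 ≠ 0 := by exact_mod_cast (by positivity : 1 + s ^ 2 ≠ 0)
  simp only [integrand]
  push_cast
  rw [show -(s : ℂ) - z = -(s + z) by ring, inv_neg, mul_inv]
  generalize ((s : ℂ) + z)⁻¹ = w
  rw [add_comm _ (1 : ℂ)]
  field_simp
  ring

lemma im_integrand_nonneg (hz : 0 ≤ z.im) (hs : 0 ≤ s) : 0 ≤ (integrand z s).im := by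
  simp only [integrand, sub_im, ofReal_im, inv_im, zero_sub, neg_div, neg_neg]
  refine div_nonneg ?_ (normSq_nonneg _)
  simpa using mul_nonneg hs hz

lemma differentiableAt_neg_log_one_add_div (hz : 1 + z ∈ slitPlane) (hz0 : z ≠ 0) :
    DifferentiableAt ℂ (fun w => -log (1 + w) / w) z :=
  (((differentiableAt_log hz).comp z (differentiableAt_id.const_add 1)).neg).div
    differentiableAt_id hz0

end NegLogOneAddDiv

open NegLogOneAddDiv in
/-- The function `-log(1+z)/z` (with value `-1` at `0`) is a Nevanlinna–Pick function
and admits an explicit integral representation on `ℂ \ (-∞, -1]`. -/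
theorem neg_log_one_add_div_nevanlinna_pick
    (f : ℂ → ℂ) (hf : ∀ z : ℂ, f z = if z = 0 then -1 else -Complex.log (1 + z) / z) :
    (∀ z : ℂ, ¬(z.im = 0 ∧ z.re ≤ -1) →
      f z = -(Real.pi / 4 : ℝ) + ∫ t in Set.Iio (-1 : ℝ),
        ((((t : ℂ) - z)⁻¹ - (t : ℂ) / ((t : ℂ) ^ 2 + 1)) * (-(t : ℂ))⁻¹)) ∧
    DifferentiableOn ℂ f {z : ℂ | 0 < z.im} ∧
    (∀ z : ℂ, 0 < z.im → 0 ≤ (f z).im) := by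
  have hrepr (z : ℂ) (hz : 1 + z ∈ slitPlane) :
      f z = -(Real.pi / 4 : ℝ) + ∫ t in Set.Iio (-1 : ℝ),
        ((((t : ℂ) - z)⁻¹ - (t : ℂ) / ((t : ℂ) ^ 2 + 1)) * (-(t : ℂ))⁻¹) := by
    rw [integral_Iio_neg_one_eq, integral_integrand hz, hf, logPrimitive]
    push_cast
    split_ifs <;> simp only [inv_one, div_one] <;> ring
  have hupper {z : ℂ} (hz : 0 < z.im) : 1 + z ∈ slitPlane ∧ z ≠ 0 :=
    ⟨one_add_mem_slitPlane_iff.2 fun h => hz.ne' h.1, fun h => by simp [h] at hz⟩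
  refine ⟨fun z hz => hrepr z (one_add_mem_slitPlane_iff.2 hz), fun z hz => ?_, fun z hz => ?_⟩
  · refine ((differentiableAt_neg_log_one_add_div (hupper hz).1
      (hupper hz).2).congr_of_eventuallyEq ?_).differentiableWithinAt
    filter_upwards [(isOpen_lt continuous_const continuous_im).mem_nhds hz] with w hw
    rw [hf, if_neg (hupper hw).2]
  · have him := integral_im (integrableOn_integrand (hupper hz).1)
    simp only [RCLike.im_to_complex] at him
    rw [hrepr z (hupper hz).1, integral_Iio_neg_one_eq, add_im, ← him]
    simpa using setIntegral_nonneg measurableSet_Ioi fun s (hs : 1 < s) =>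
      im_integrand_nonneg (z := z) hz.le (by linarith)
end

section
/- (Horn's theorem) For a C^∞ function f : (0,∞) → (0,∞), the following are equivalent: (i) −(log f)' = −f'/f is completely monotonic; (ii) f^c is completely monotonic for every c > 0; (iii) f^{1/n} is completely monotonic for every n = 1, 2, 3, …. Moreover each of these conditions implies that f itself is completely monotonic. -/
open MeasureTheory Set

def CompletelyMonotonic (f : ℝ → ℝ) : Prop :=
  ContDiffOn ℝ (⊤ : ℕ∞) f (Set.Ioi 0) ∧
  ∀ (n : ℕ) (x : ℝ), 0 < x → 0 ≤ (-1 : ℝ) ^ n * iteratedDeriv n f x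

open Filter Topology Finset

variable {s : Set ℝ}

lemma itdW_eq_itd (hs : IsOpen s) {x : ℝ} (hx : x ∈ s) (n : ℕ) (h : ℝ → ℝ) :
    iteratedDerivWithin n h s x = iteratedDeriv n h x := by
  simp only [iteratedDerivWithin_eq_iteratedFDerivWithin, iteratedDeriv_eq_iteratedFDeriv]
  rw [iteratedFDerivWithin_of_isOpen n hs hx]

lemma itd_smooth (hs : IsOpen s) {h : ℝ → ℝ} (hh : ContDiffOn ℝ (⊤ : ℕ∞) h s) (n : ℕ) :
    ContDiffOn ℝ (⊤ : ℕ∞) (iteratedDeriv n h) s := by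
  induction n with
  | zero => simpa using hh
  | succ n ih => rw [iteratedDeriv_succ]; exact ih.deriv_of_isOpen hs (by simp)

lemma itd_diffAt (hs : IsOpen s) {h : ℝ → ℝ} (hh : ContDiffOn ℝ (⊤ : ℕ∞) h s) (n : ℕ)
    {x : ℝ} (hx : x ∈ s) : DifferentiableAt ℝ (iteratedDeriv n h) x :=
  ((itd_smooth hs hh n).differentiableOn (by simp)).differentiableAt (hs.mem_nhds hx)

lemma itd_const_mul (hs : IsOpen s) {h : ℝ → ℝ} (hh : ContDiffOn ℝ (⊤ : ℕ∞) h s) (a : ℝ)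
    {x : ℝ} (hx : x ∈ s) (n : ℕ) :
    iteratedDeriv n (fun y => a * h y) x = a * iteratedDeriv n h x := by
  rw [← itdW_eq_itd hs hx, ← itdW_eq_itd hs hx,
    iteratedDerivWithin_const_mul hx hs.uniqueDiffOn a (hh.of_le (by exact_mod_cast le_top) x hx)]


lemma leibniz_alg (n : ℕ) (A B : ℕ → ℝ) :
    ∑ j ∈ Finset.range (n+1), ((n.choose j : ℝ) * A (j+1) * B (n-j)
        + (n.choose j : ℝ) * A j * B (n-j+1))
    = ∑ j ∈ Finset.range (n+2), (((n+1).choose j : ℝ) * A j * B (n+1-j)) := by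
  rw [Finset.sum_add_distrib, Finset.sum_range_succ' _ (n+1)]
  have h1 : ∀ j ∈ Finset.range (n+1), ((n+1).choose (j+1) : ℝ) * A (j+1) * B (n+1-(j+1))
      = (n.choose j : ℝ) * A (j+1) * B (n-j) + (n.choose (j+1) : ℝ) * A (j+1) * B (n-j) := by
    intro j hj
    rw [Nat.choose_succ_succ]
    push_cast
    ring
  rw [Finset.sum_congr rfl h1, Finset.sum_add_distrib]
  have h2 : ∑ j ∈ Finset.range (n+1), (n.choose j : ℝ) * A j * B (n-j+1)
      = ∑ j ∈ Finset.range (n+1), (n.choose (j+1) : ℝ) * A (j+1) * B (n-j)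
        + A 0 * B (n+1) := by
    rw [Finset.sum_range_succ' _ n, Finset.sum_range_succ _ n]
    simp only [Nat.choose_succ_self, Nat.cast_zero, zero_mul, add_zero, Nat.choose_zero_right,
      Nat.cast_one, one_mul, Nat.sub_zero]
    apply congrArg₂ _ ?_ rfl
    apply Finset.sum_congr rfl
    intro j hj
    simp only [Finset.mem_range] at hj
    have : n - (j+1) + 1 = n - j := by omega
    rw [this]
  rw [h2]
  simp only [Nat.choose_zero_right, Nat.cast_one, one_mul, Nat.sub_zero]
  ring

lemma itd_mul (hs : IsOpen s) {u v : ℝ → ℝ} (hu : ContDiffOn ℝ (⊤ : ℕ∞) u s) (hv : ContDiffOn ℝ (⊤ : ℕ∞) v s)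
    (n : ℕ) : ∀ x ∈ s, iteratedDeriv n (fun y => u y * v y) x =
      ∑ j ∈ Finset.range (n+1),
        (n.choose j : ℝ) * iteratedDeriv j u x * iteratedDeriv (n-j) v x := by
  induction n with
  | zero => intro x hx; simp
  | succ n ih =>
    intro x hx
    have heq : iteratedDeriv n (fun y => u y * v y) =ᶠ[𝓝 x]
        fun y => ∑ j ∈ Finset.range (n+1),
          (n.choose j : ℝ) * iteratedDeriv j u y * iteratedDeriv (n-j) v y := by
      filter_upwards [hs.mem_nhds hx] with y hy
      exact ih y hy
    rw [iteratedDeriv_succ, heq.deriv_eq]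
    have hdiff : ∀ j ∈ Finset.range (n+1), DifferentiableAt ℝ
        (fun y => (n.choose j : ℝ) * iteratedDeriv j u y * iteratedDeriv (n-j) v y) x := by
      intro j _
      exact (((itd_diffAt hs hu j hx).const_mul _).mul (itd_diffAt hs hv (n-j) hx))
    rw [deriv_fun_sum hdiff]
    have hterm : ∀ j ∈ Finset.range (n+1),
        deriv (fun y => (n.choose j : ℝ) * iteratedDeriv j u y * iteratedDeriv (n-j) v y) x
        = (n.choose j : ℝ) * iteratedDeriv (j+1) u x * iteratedDeriv (n-j) v x
          + (n.choose j : ℝ) * iteratedDeriv j u x * iteratedDeriv (n-j+1) v x := by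
      intro j _
      rw [deriv_fun_mul ((itd_diffAt hs hu j hx).const_mul _) (itd_diffAt hs hv (n-j) hx),
        deriv_const_mul _ (itd_diffAt hs hu j hx), iteratedDeriv_succ, iteratedDeriv_succ]
    rw [Finset.sum_congr rfl hterm]
    exact leibniz_alg n (fun j => iteratedDeriv j u x) (fun j => iteratedDeriv j v x)

lemma expCM (hs : IsOpen s) {g φ : ℝ → ℝ} (hg : ContDiffOn ℝ (⊤ : ℕ∞) g s) (hφ : ContDiffOn ℝ (⊤ : ℕ∞) φ s)
    (hφ0 : ∀ x ∈ s, 0 ≤ φ x) {c : ℝ} (hc : 0 ≤ c)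
    (hgsign : ∀ (n : ℕ), ∀ x ∈ s, 0 ≤ (-1:ℝ)^n * iteratedDeriv n g x)
    (hdφ : ∀ x ∈ s, deriv φ x = -c * (g x * φ x)) :
    ∀ (n : ℕ), ∀ x ∈ s, 0 ≤ (-1:ℝ)^n * iteratedDeriv n φ x := by
  intro n
  induction n using Nat.strong_induction_on with
  | _ n IH =>
  match n with
  | 0 => intro x hx; simpa using hφ0 x hx
  | (m+1) =>
    intro x hx
    have h2 : iteratedDeriv (m+1) φ x = iteratedDeriv m (fun y => (-c) * (g y * φ y)) x := by
      rw [iteratedDeriv_succ']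
      apply Filter.EventuallyEq.iteratedDeriv_eq
      filter_upwards [hs.mem_nhds hx] with y hy
      simpa using hdφ y hy
    rw [h2, itd_const_mul hs (hg.mul hφ) (-c) hx m, itd_mul hs hg hφ m x hx]
    set S := ∑ j ∈ Finset.range (m+1),
        (m.choose j : ℝ) * iteratedDeriv j g x * iteratedDeriv (m-j) φ x with hSdef
    have key : 0 ≤ (-1:ℝ)^m * S := by
      rw [hSdef, Finset.mul_sum]
      apply Finset.sum_nonneg
      intro j hj
      have hjm : j ≤ m := Nat.lt_succ_iff.mp (Finset.mem_range.mp hj)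
      have hpow : (-1:ℝ)^m = (-1)^j * (-1)^(m-j) := by
        rw [← pow_add, Nat.add_sub_cancel' hjm]
      have e1 := hgsign j x hx
      have e2 := IH (m-j) (by omega) x hx
      have : (-1:ℝ)^m * ((m.choose j : ℝ) * iteratedDeriv j g x * iteratedDeriv (m-j) φ x)
          = (m.choose j : ℝ) * (((-1:ℝ)^j * iteratedDeriv j g x)
            * ((-1:ℝ)^(m-j) * iteratedDeriv (m-j) φ x)) := by
        rw [hpow]; ring
      rw [this]
      exact mul_nonneg (Nat.cast_nonneg _) (mul_nonneg e1 e2)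
    have : (-1:ℝ)^(m+1) * (-c * S) = c * ((-1:ℝ)^m * S) := by ring
    rw [this]
    exact mul_nonneg hc key

section Erep

variable {f : ℝ → ℝ}

lemma E_hasDeriv (hsmooth : ContDiffOn ℝ (⊤ : ℕ∞) f (Set.Ioi 0)) (hpos : ∀ x > (0:ℝ), 0 < f x)
    (c : ℝ) {x : ℝ} (hx : x ∈ Set.Ioi (0:ℝ)) :
    HasDerivAt (fun y => Real.exp (c * Real.log (f y)))
      (Real.exp (c * Real.log (f x)) * (c * (deriv f x / f x))) x := by
  have hfd : HasDerivAt f (deriv f x) x :=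
    (((hsmooth.differentiableOn (by simp)).differentiableAt
      (isOpen_Ioi.mem_nhds hx))).hasDerivAt
  have hlog : HasDerivAt (fun y => Real.log (f y)) (deriv f x / f x) x :=
    hfd.log (hpos x hx).ne'
  have := (hlog.const_mul c).exp
  simpa [mul_comm, mul_assoc, mul_left_comm, mul_div_assoc] using this

lemma E_smooth (hsmooth : ContDiffOn ℝ (⊤ : ℕ∞) f (Set.Ioi 0)) (hpos : ∀ x > (0:ℝ), 0 < f x)
    (c : ℝ) : ContDiffOn ℝ (⊤ : ℕ∞) (fun y => Real.exp (c * Real.log (f y))) (Set.Ioi 0) :=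
  Real.contDiff_exp.comp_contDiffOn
    (contDiffOn_const.mul (hsmooth.log fun x hx => (hpos x hx).ne'))

lemma w_smooth (hsmooth : ContDiffOn ℝ (⊤ : ℕ∞) f (Set.Ioi 0)) (hpos : ∀ x > (0:ℝ), 0 < f x) :
    ContDiffOn ℝ (⊤ : ℕ∞) (fun y => deriv f y / f y) (Set.Ioi 0) :=
  (hsmooth.deriv_of_isOpen isOpen_Ioi (by simp)).div hsmooth fun x hx => (hpos x hx).ne'

lemma E_deriv_rep (hsmooth : ContDiffOn ℝ (⊤ : ℕ∞) f (Set.Ioi 0)) (hpos : ∀ x > (0:ℝ), 0 < f x)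
    (j : ℕ) (hj : 1 ≤ j) :
    ∃ (m : ℕ) (p : ℕ → ℕ) (a : ℕ → ℝ → ℝ),
      (∀ i, 1 ≤ p i) ∧ (∀ i, ContDiffOn ℝ (⊤ : ℕ∞) (a i) (Set.Ioi 0)) ∧
      ∀ (c : ℝ), ∀ x ∈ Set.Ioi (0:ℝ),
        iteratedDeriv j (fun y => Real.exp (c * Real.log (f y))) x
          = Real.exp (c * Real.log (f x)) * ∑ i ∈ Finset.range m, c ^ (p i) * a i x := by
  induction j, hj using Nat.le_induction with
  | base =>
    refine ⟨1, fun _ => 1, fun _ => fun y => deriv f y / f y, fun _ => le_refl 1,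
      fun _ => w_smooth hsmooth hpos, ?_⟩
    intro c x hx
    rw [iteratedDeriv_one, (E_hasDeriv hsmooth hpos c hx).deriv]
    simp
  | succ j hj ih =>
    obtain ⟨m, p, a, hp, ha, hrep⟩ := ih
    refine ⟨m + m,
      fun i => if i < m then p i + 1 else p (i - m),
      fun i => if i < m then (fun y => (deriv f y / f y) * a i y)
               else (fun y => deriv (a (i - m)) y), ?_, ?_, ?_⟩
    · intro i
      by_cases h : i < m <;> simp [h, hp, Nat.le_succ_of_le (hp i)]
    · intro i
      by_cases h : i < m <;> simp only [h, if_true, if_false]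
      · exact (w_smooth hsmooth hpos).mul (ha i)
      · exact (ha (i - m)).deriv_of_isOpen isOpen_Ioi (by simp)
    · intro c x hx
      have heq : iteratedDeriv j (fun y => Real.exp (c * Real.log (f y))) =ᶠ[𝓝 x]
          fun y => Real.exp (c * Real.log (f y)) * ∑ i ∈ Finset.range m, c ^ (p i) * a i y := by
        filter_upwards [isOpen_Ioi.mem_nhds hx] with y hy
        exact hrep c y hy
      rw [iteratedDeriv_succ, heq.deriv_eq]
      have hadiff : ∀ i, DifferentiableAt ℝ (a i) x := fun i =>
        ((ha i).differentiableOn (by simp)).differentiableAt (isOpen_Ioi.mem_nhds hx)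
      have hSdiff : DifferentiableAt ℝ (fun y => ∑ i ∈ Finset.range m, c ^ (p i) * a i y) x :=
        DifferentiableAt.fun_sum fun i _ => (hadiff i).const_mul _
      rw [deriv_fun_mul ((E_hasDeriv hsmooth hpos c hx).differentiableAt) hSdiff,
        (E_hasDeriv hsmooth hpos c hx).deriv]
      have hdS : deriv (fun y => ∑ i ∈ Finset.range m, c ^ (p i) * a i y) x
          = ∑ i ∈ Finset.range m, c ^ (p i) * deriv (a i) x := by
        rw [deriv_fun_sum fun i _ => (hadiff i).const_mul _]
        exact Finset.sum_congr rfl fun i _ => deriv_const_mul _ (hadiff i)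
      rw [hdS, Finset.sum_range_add]
      have e1 : ∑ i ∈ Finset.range m,
          c ^ (if i < m then p i + 1 else p (i - m)) *
            (if i < m then (fun y => (deriv f y / f y) * a i y)
             else (fun y => deriv (a (i - m)) y)) x
          = ∑ i ∈ Finset.range m, c ^ (p i + 1) * ((deriv f x / f x) * a i x) := by
        apply Finset.sum_congr rfl
        intro i hi
        have : i < m := Finset.mem_range.mp hi
        simp [this]
      have e2 : ∑ i ∈ Finset.range m,
          c ^ (if m + i < m then p (m + i) + 1 else p (m + i - m)) *
            (if m + i < m then (fun y => (deriv f y / f y) * a (m + i) y)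
             else (fun y => deriv (a (m + i - m)) y)) x
          = ∑ i ∈ Finset.range m, c ^ (p i) * deriv (a i) x := by
        apply Finset.sum_congr rfl
        intro i hi
        have h1 : ¬ (m + i < m) := by omega
        simp [h1]
      rw [e1, e2, mul_add]
      simp only [Finset.mul_sum]
      congr 1
      exact Finset.sum_congr rfl fun i _ => by rw [pow_succ]; ring

end Erep

/-- Horn's theorem characterizing logarithmically completely monotonic functions. -/
theorem horn_theorem (f : ℝ → ℝ) (hsmooth : ContDiffOn ℝ (⊤ : ℕ∞) f (Set.Ioi 0))
    (hpos : ∀ x > (0:ℝ), 0 < f x) :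
    ((CompletelyMonotonic (fun x => -(deriv f x / f x)) ↔
        ∀ c > (0:ℝ), CompletelyMonotonic (fun x => f x ^ c)) ∧
      ((∀ c > (0:ℝ), CompletelyMonotonic (fun x => f x ^ c)) ↔
        ∀ n : ℕ, 1 ≤ n → CompletelyMonotonic (fun x => f x ^ ((n : ℝ))⁻¹))) ∧
    (CompletelyMonotonic (fun x => -(deriv f x / f x)) → CompletelyMonotonic f) := by
  set g : ℝ → ℝ := fun x => -(deriv f x / f x) with hgdef
  have hg_smooth : ContDiffOn ℝ (⊤ : ℕ∞) g (Set.Ioi 0) := (w_smooth hsmooth hpos).neg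
  -- (i) → (ii)
  have Hi2ii : CompletelyMonotonic g → ∀ c > (0:ℝ), CompletelyMonotonic (fun x => f x ^ c) := by
    intro hCM c hc
    set E : ℝ → ℝ := fun y => Real.exp (c * Real.log (f y)) with hEdef
    have hE_smooth : ContDiffOn ℝ (⊤ : ℕ∞) E (Set.Ioi 0) := E_smooth hsmooth hpos c
    have hEq : ∀ x ∈ Set.Ioi (0:ℝ), f x ^ c = E x := fun x hx => by
      rw [Real.rpow_def_of_pos (hpos x hx), mul_comm]
    have hdE : ∀ y ∈ Set.Ioi (0:ℝ), deriv E y = -c * (g y * E y) := by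
      intro y hy
      rw [(E_hasDeriv hsmooth hpos c hy).deriv, hgdef]
      ring
    have hsign := expCM isOpen_Ioi hg_smooth hE_smooth
      (fun y _ => (Real.exp_pos _).le) hc.le (fun n y hy => hCM.2 n y hy) hdE
    constructor
    · exact hE_smooth.congr hEq
    · intro n x hx
      have h1 : iteratedDeriv n (fun x => f x ^ c) x = iteratedDeriv n E x := by
        apply Filter.EventuallyEq.iteratedDeriv_eq
        filter_upwards [isOpen_Ioi.mem_nhds (show x ∈ Set.Ioi (0:ℝ) from hx)] with y hy
        exact hEq y hy
      rw [h1]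
      exact hsign n x hx
  -- (ii) → (iii)
  have Hii2iii : (∀ c > (0:ℝ), CompletelyMonotonic (fun x => f x ^ c)) →
      ∀ n : ℕ, 1 ≤ n → CompletelyMonotonic (fun x => f x ^ ((n : ℝ))⁻¹) := by
    intro h n hn
    have : (0:ℝ) < ((n:ℝ))⁻¹ := by
      have : (0:ℝ) < (n:ℝ) := by exact_mod_cast hn
      positivity
    exact h _ this
  -- (iii) → (i)
  have Hiii2i : (∀ n : ℕ, 1 ≤ n → CompletelyMonotonic (fun x => f x ^ ((n : ℝ))⁻¹)) →
      CompletelyMonotonic g := by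
    intro H
    refine ⟨hg_smooth, ?_⟩
    intro k x hx0
    have hx : x ∈ Set.Ioi (0:ℝ) := hx0
    set T : ℕ → ℝ := fun n => ∑ j ∈ Finset.range (k+1),
      (k.choose j : ℝ) * iteratedDeriv j (fun y => Real.exp (((n:ℝ))⁻¹ * Real.log (f y))) x
        * iteratedDeriv (k-j) g x with hTdef
    -- sign of T n for n ≥ 1
    have hsign : ∀ n : ℕ, 1 ≤ n → 0 ≤ (-1:ℝ)^k * T n := by
      intro n hn
      obtain ⟨hF_smooth, hF_sign⟩ := H n hn
      have hn0 : ((n:ℝ)) ≠ 0 := by positivity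
      have hEg : ∀ y ∈ Set.Ioi (0:ℝ),
          Real.exp (((n:ℝ))⁻¹ * Real.log (f y)) * g y
            = (-(n:ℝ)) * deriv (fun z => f z ^ ((n:ℝ))⁻¹) y := by
        intro y hy
        have hfy : 0 < f y := hpos y hy
        have hfd : HasDerivAt f (deriv f y) y :=
          ((hsmooth.differentiableOn (by simp)).differentiableAt
            (isOpen_Ioi.mem_nhds hy)).hasDerivAt
        have hF : HasDerivAt (fun z => f z ^ ((n:ℝ))⁻¹)
            (deriv f y * ((n:ℝ))⁻¹ * f y ^ (((n:ℝ))⁻¹ - 1)) y :=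
          hfd.rpow_const (Or.inl hfy.ne')
        rw [hF.deriv]
        have h1 : f y ^ (((n:ℝ))⁻¹ - 1) = f y ^ ((n:ℝ))⁻¹ / f y := by
          rw [Real.rpow_sub hfy, Real.rpow_one]
        have h2 : Real.exp (((n:ℝ))⁻¹ * Real.log (f y)) = f y ^ ((n:ℝ))⁻¹ := by
          rw [Real.rpow_def_of_pos hfy, mul_comm]
        rw [h1, h2, hgdef]
        field_simp
      have hT_eq : T n = (-(n:ℝ)) * iteratedDeriv (k+1) (fun z => f z ^ ((n:ℝ))⁻¹) x := by
        have h1 := (itd_mul isOpen_Ioi (E_smooth hsmooth hpos ((n:ℝ))⁻¹) hg_smooth k x hx).symm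
        have h2 : iteratedDeriv k (fun y => Real.exp (((n:ℝ))⁻¹ * Real.log (f y)) * g y) x
            = iteratedDeriv k (fun y => (-(n:ℝ)) * deriv (fun z => f z ^ ((n:ℝ))⁻¹) y) x := by
          apply Filter.EventuallyEq.iteratedDeriv_eq
          filter_upwards [isOpen_Ioi.mem_nhds hx] with y hy
          exact hEg y hy
        have h3 := itd_const_mul isOpen_Ioi
          (hF_smooth.deriv_of_isOpen isOpen_Ioi (by simp)) (-(n:ℝ)) hx k
        simp only [hTdef]
        rw [h1, h2, h3, ← iteratedDeriv_succ']
      rw [hT_eq]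
      have hsgn := hF_sign (k+1) x hx0
      have hring : (-1:ℝ)^k * ((-(n:ℝ)) * iteratedDeriv (k+1) (fun z => f z ^ ((n:ℝ))⁻¹) x)
          = (n:ℝ) * ((-1:ℝ)^(k+1) * iteratedDeriv (k+1) (fun z => f z ^ ((n:ℝ))⁻¹) x) := by
        ring
      rw [hring]
      exact mul_nonneg (Nat.cast_nonneg _) hsgn
    -- limit of T n
    have hexp : Filter.Tendsto (fun n : ℕ => Real.exp (((n:ℝ))⁻¹ * Real.log (f x)))
        Filter.atTop (𝓝 1) := by
      have h0 : Filter.Tendsto (fun n : ℕ => ((n:ℝ))⁻¹ * Real.log (f x))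
          Filter.atTop (𝓝 0) := by
        simpa using tendsto_inv_atTop_nhds_zero_nat.mul_const (Real.log (f x))
      simpa [Function.comp_def] using (Real.continuous_exp.tendsto 0).comp h0
    have hT_lim : Filter.Tendsto T Filter.atTop (𝓝 (iteratedDeriv k g x)) := by
      have hsum : iteratedDeriv k g x = ∑ j ∈ Finset.range (k+1),
          (if j = 0 then (k.choose j : ℝ) * (1 * iteratedDeriv (k-j) g x) else 0) := by
        rw [Finset.sum_ite_eq' (Finset.range (k+1)) 0
          (fun j => (k.choose j : ℝ) * (1 * iteratedDeriv (k-j) g x))]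
        simp
      rw [hsum, hTdef]
      apply tendsto_finset_sum
      intro j hj
      by_cases hj0 : j = 0
      · subst hj0
        simp only [if_true, iteratedDeriv_zero, Nat.choose_zero_right, Nat.cast_one,
          Nat.sub_zero, one_mul]
        have : Filter.Tendsto (fun n : ℕ =>
            Real.exp (((n:ℝ))⁻¹ * Real.log (f x)) * iteratedDeriv k g x)
            Filter.atTop (𝓝 (1 * iteratedDeriv k g x)) := hexp.mul_const _
        simpa using this
      · simp only [hj0, if_false]
        have hj1 : 1 ≤ j := Nat.one_le_iff_ne_zero.mpr hj0
        obtain ⟨m, p, a, hp, ha, hrep⟩ := E_deriv_rep hsmooth hpos j hj1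
        have hS : Filter.Tendsto (fun n : ℕ => ∑ i ∈ Finset.range m, (((n:ℝ))⁻¹)^(p i) * a i x)
            Filter.atTop (𝓝 0) := by
          rw [show (0:ℝ) = ∑ i ∈ Finset.range m, (0:ℝ) by simp]
          apply tendsto_finset_sum
          intro i _
          have h1 : Filter.Tendsto (fun n : ℕ => (((n:ℝ))⁻¹)^(p i)) Filter.atTop (𝓝 0) := by
            have := (tendsto_inv_atTop_nhds_zero_nat (𝕜 := ℝ)).pow (p i)
            simpa [zero_pow (Nat.one_le_iff_ne_zero.mp (hp i))] using this
          simpa using h1.mul_const (a i x)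
        have hmain : Filter.Tendsto (fun n : ℕ => (k.choose j : ℝ) *
            (Real.exp (((n:ℝ))⁻¹ * Real.log (f x)) * ∑ i ∈ Finset.range m, (((n:ℝ))⁻¹)^(p i) * a i x)
            * iteratedDeriv (k-j) g x) Filter.atTop (𝓝 ((k.choose j : ℝ) * (1 * 0)
            * iteratedDeriv (k-j) g x)) :=
          (((hexp.mul hS).const_mul _).mul_const _)
        have hmain' : Filter.Tendsto (fun n : ℕ => (k.choose j : ℝ) *
            iteratedDeriv j (fun y => Real.exp (((n:ℝ))⁻¹ * Real.log (f y))) x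
            * iteratedDeriv (k-j) g x) Filter.atTop (𝓝 ((k.choose j : ℝ) * (1 * 0)
            * iteratedDeriv (k-j) g x)) := by
          apply hmain.congr
          intro n
          rw [hrep ((n:ℝ))⁻¹ x hx]
        simpa using hmain'
    have h1 : Filter.Tendsto (fun n => (-1:ℝ)^k * T n) Filter.atTop
        (𝓝 ((-1:ℝ)^k * iteratedDeriv k g x)) := hT_lim.const_mul _
    exact ge_of_tendsto h1 (Filter.eventually_atTop.mpr ⟨1, hsign⟩)
  refine ⟨⟨⟨Hi2ii, fun h => Hiii2i (Hii2iii h)⟩, ⟨Hii2iii, fun h => Hi2ii (Hiii2i h)⟩⟩, ?_⟩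
  intro h
  have h1 := Hi2ii h 1 one_pos
  have heq : (fun x => f x ^ (1:ℝ)) = f := funext fun x => Real.rpow_one _
  rwa [heq] at h1
end

section
/- If f : (0,∞) → (0,∞) is logarithmically completely monotonic, then its holomorphic extension f(z) = ∫₀^∞ e^{−zt} dμ(t) to the open right half-plane {Re z > 0} has no zeros there. -/
open MeasureTheory Set
open scoped ENNReal NNReal

private noncomputable def Tc (φ : ℝ → ℝ) (x₀ : ℝ) (n : ℕ) (x : ℝ) : ℝ :=
  ∑ k ∈ Finset.range (n+1), iteratedDeriv k φ x₀ * (x - x₀)^k / (k.factorial : ℝ)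

private lemma hasDerivAt_iter {φ : ℝ → ℝ} (hφ : ContDiffOn ℝ (⊤ : ℕ∞) φ (Set.Ioi 0)) (m : ℕ)
    {t : ℝ} (ht : (0:ℝ) < t) :
    HasDerivAt (iteratedDeriv m φ) (iteratedDeriv (m+1) φ t) t := by
  have h1 : DifferentiableOn ℝ (iteratedDerivWithin m φ (Set.Ioi 0)) (Set.Ioi 0) :=
    hφ.differentiableOn_iteratedDerivWithin (by exact_mod_cast lt_top_iff_ne_top.2 (by simp))
      isOpen_Ioi.uniqueDiffOn
  have heq : ∀ y ∈ Set.Ioi (0:ℝ), iteratedDerivWithin m φ (Set.Ioi 0) y = iteratedDeriv m φ y := by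
    intro y hy
    rw [iteratedDerivWithin_eq_iteratedFDerivWithin, iteratedDeriv_eq_iteratedFDeriv,
      iteratedFDerivWithin_of_isOpen m isOpen_Ioi hy]
  have h2 : DifferentiableWithinAt ℝ (iteratedDeriv m φ) (Set.Ioi 0) t :=
    (h1 t ht).congr (fun y hy => (heq y hy).symm) (heq t ht).symm
  have h3 : DifferentiableAt ℝ (iteratedDeriv m φ) t := h2.differentiableAt (Ioi_mem_nhds ht)
  rw [iteratedDeriv_succ]
  exact h3.hasDerivAt

private lemma hasDerivAt_taylor (φ : ℝ → ℝ) (x₀ : ℝ) (n : ℕ) (t : ℝ) :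
    HasDerivAt (fun x => ∑ k ∈ Finset.range (n+1), iteratedDeriv k φ x₀ * (x - x₀)^k / (k.factorial : ℝ))
      (∑ k ∈ Finset.range n, iteratedDeriv (k+1) φ x₀ * (t - x₀)^k / (k.factorial : ℝ)) t := by
  induction n with
  | zero =>
    simp only [Finset.range_one, Finset.sum_singleton, Finset.range_zero, Finset.sum_empty,
      pow_zero, Nat.factorial_zero]
    simpa using hasDerivAt_const t (iteratedDeriv 0 φ x₀ * 1 / 1)
  | succ n ih =>
    have h1 : HasDerivAt (fun x : ℝ => iteratedDeriv (n+1) φ x₀ * (x - x₀)^(n+1) / ((n+1).factorial : ℝ))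
        (iteratedDeriv (n+1) φ x₀ * (t - x₀)^n / (n.factorial : ℝ)) t := by
      have hp : HasDerivAt (fun x : ℝ => (x - x₀)^(n+1)) ((n+1) * (t - x₀)^n * 1) t :=
        by simpa using ((hasDerivAt_id t).sub_const x₀).fun_pow (n+1)
      have := (hp.const_mul (iteratedDeriv (n+1) φ x₀)).div_const ((n+1).factorial : ℝ)
      refine this.congr_deriv ?_
      rw [Nat.factorial_succ]
      push_cast
      have hn : (n.factorial : ℝ) ≠ 0 := by positivity
      field_simp
    have h2 := (ih.add h1)
    have e1 : (fun x => ∑ k ∈ Finset.range (n+1+1), iteratedDeriv k φ x₀ * (x - x₀)^k / (k.factorial : ℝ))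
        = (fun x => (∑ k ∈ Finset.range (n+1), iteratedDeriv k φ x₀ * (x - x₀)^k / (k.factorial : ℝ)) +
          iteratedDeriv (n+1) φ x₀ * (x - x₀)^(n+1) / ((n+1).factorial : ℝ)) := by
      funext x; rw [Finset.sum_range_succ]
    rw [e1, Finset.sum_range_succ]
    exact h2

private lemma endpoint_le {F F' : ℝ → ℝ} {a b : ℝ} (hab : a ≤ b)
    (hd : ∀ t ∈ Set.Icc a b, HasDerivAt F (F' t) t)
    (h0 : ∀ t ∈ Set.Icc a b, F' t ≤ 0) : F b ≤ F a := by
  have cont : ContinuousOn F (Set.Icc a b) := fun t ht =>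
    (hd t ht).continuousAt.continuousWithinAt
  have diff : DifferentiableOn ℝ F (interior (Set.Icc a b)) := fun t ht =>
    ((hd t (interior_subset ht)).differentiableAt).differentiableWithinAt
  have hanti := antitoneOn_of_deriv_nonpos (convex_Icc a b) cont diff (fun t ht => by
    rw [(hd t (interior_subset ht)).deriv]; exact h0 t (interior_subset ht))
  exact hanti (left_mem_Icc.2 hab) (right_mem_Icc.2 hab) hab


private lemma Tc_self (φ : ℝ → ℝ) (x₀ : ℝ) (n : ℕ) : Tc φ x₀ n x₀ = φ x₀ := by
  rw [Tc, Finset.sum_eq_single_of_mem 0 (Finset.mem_range.2 (Nat.succ_pos n))]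
  · simp
  · intro k _ hk
    simp [zero_pow hk]
private lemma hasDerivAt_E {φ : ℝ → ℝ} (hφ : ContDiffOn ℝ (⊤ : ℕ∞) φ (Set.Ioi 0)) (x₀ : ℝ) (n : ℕ)
    {t : ℝ} (ht : (0:ℝ) < t) :
    HasDerivAt (fun x => φ x - Tc φ x₀ (n+1) x)
      (-((fun y => -(deriv φ y)) t - Tc (fun y => -(deriv φ y)) x₀ n t)) t := by
  have h0 : HasDerivAt φ (iteratedDeriv 1 φ t) t := by
    have := hasDerivAt_iter hφ 0 ht
    rwa [iteratedDeriv_zero] at this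
  have h1 := h0.sub (hasDerivAt_taylor φ x₀ (n+1) t)
  have heq : iteratedDeriv 1 φ t - ∑ k ∈ Finset.range (n+1), iteratedDeriv (k+1) φ x₀ * (t - x₀)^k / (k.factorial : ℝ)
      = -((fun y => -(deriv φ y)) t - Tc (fun y => -(deriv φ y)) x₀ n t) := by
    have hTc : Tc (fun y => -(deriv φ y)) x₀ n t
        = -∑ k ∈ Finset.range (n+1), iteratedDeriv (k+1) φ x₀ * (t - x₀)^k / (k.factorial : ℝ) := by
      rw [Tc, ← Finset.sum_neg_distrib]
      refine Finset.sum_congr rfl fun k _ => ?_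
      rw [iteratedDeriv_fun_neg, ← iteratedDeriv_succ']
      ring
    simp only [hTc, iteratedDeriv_one]
    ring
  rw [heq] at h1
  exact h1

private lemma mainE : ∀ (n : ℕ) (φ : ℝ → ℝ), ContDiffOn ℝ (⊤ : ℕ∞) φ (Set.Ioi 0) →
    (∀ k : ℕ, k ≠ 0 → ∀ x : ℝ, 0 < x → 0 ≤ (-1:ℝ)^k * iteratedDeriv k φ x) →
    ∀ x₀ x : ℝ, 0 < x → x ≤ x₀ →
      0 ≤ φ x - Tc φ x₀ n x ∧
      φ x - Tc φ x₀ n x ≤ (-1:ℝ)^(n+1) * iteratedDeriv (n+1) φ x * (x₀ - x)^(n+1) / ((n+1).factorial : ℝ) := by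
  intro n
  induction n with
  | zero =>
    intro φ hφ hyp x₀ x hx hxx
    have hposIcc : ∀ t ∈ Set.Icc x x₀, (0:ℝ) < t := fun t ht => lt_of_lt_of_le hx ht.1
    have hTc0 : ∀ y : ℝ, Tc φ x₀ 0 y = φ x₀ := by intro y; simp [Tc]
    have hd : ∀ t ∈ Set.Icc x x₀, HasDerivAt (fun y => φ y - Tc φ x₀ 0 y) (iteratedDeriv 1 φ t) t := by
      intro t ht
      have h0 : HasDerivAt φ (iteratedDeriv 1 φ t) t := by
        have := hasDerivAt_iter hφ 0 (hposIcc t ht)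
        rwa [iteratedDeriv_zero] at this
      simp only [hTc0]
      exact h0.sub_const (φ x₀)
    have hit1 : ∀ t ∈ Set.Icc x x₀, iteratedDeriv 1 φ t ≤ 0 := by
      intro t ht
      have h1 := hyp 1 one_ne_zero t (hposIcc t ht)
      rw [pow_one, neg_one_mul] at h1
      linarith
    have hE0 : φ x₀ - Tc φ x₀ 0 x₀ = 0 := by rw [hTc0]; ring
    have hlow : 0 ≤ φ x - Tc φ x₀ 0 x := by
      have := endpoint_le hxx hd hit1
      linarith
    refine ⟨hlow, ?_⟩
    -- upper bound
    set A : ℝ := (-1:ℝ)^(0+1) * iteratedDeriv (0+1) φ x with hA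
    have hBanti : ∀ t ∈ Set.Icc x x₀, -iteratedDeriv 1 φ t ≤ A := by
      intro t ht
      have hd2 : ∀ s ∈ Set.Icc x t, HasDerivAt (fun y => -iteratedDeriv 1 φ y) (-iteratedDeriv 2 φ s) s := by
        intro s hs
        exact (hasDerivAt_iter hφ 1 (hposIcc s ⟨hs.1, le_trans hs.2 ht.2⟩)).neg
      have hd2n : ∀ s ∈ Set.Icc x t, -iteratedDeriv 2 φ s ≤ 0 := by
        intro s hs
        have h2 := hyp 2 two_ne_zero s (hposIcc s ⟨hs.1, le_trans hs.2 ht.2⟩)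
        simp only [neg_one_sq, one_mul] at h2
        linarith
      have := endpoint_le ht.1 hd2 hd2n
      rw [hA]; rw [pow_one, neg_one_mul]; linarith
    have hΨd : ∀ t ∈ Set.Icc x x₀, HasDerivAt
        (fun t => A * (x₀ - t) - (φ t - Tc φ x₀ 0 t)) (-A - iteratedDeriv 1 φ t) t := by
      intro t ht
      have h1 : HasDerivAt (fun t : ℝ => A * (x₀ - t)) (-A) t := by
        have := (((hasDerivAt_id t).neg.const_add x₀).const_mul A)
        simpa [sub_eq_add_neg] using this
      exact h1.sub (hd t ht)
    have hΨnonpos : ∀ t ∈ Set.Icc x x₀, -A - iteratedDeriv 1 φ t ≤ 0 := by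
      intro t ht
      have := hBanti t ht
      linarith
    have hfin := endpoint_le hxx hΨd hΨnonpos
    have hΨx₀ : A * (x₀ - x₀) - (φ x₀ - Tc φ x₀ 0 x₀) = 0 := by rw [hE0]; ring
    rw [hΨx₀] at hfin
    have : φ x - Tc φ x₀ 0 x ≤ A * (x₀ - x) := by linarith
    simpa [hA] using this
  | succ n ih =>
    intro φ hφ hyp x₀ x hx hxx
    have hposIcc : ∀ t ∈ Set.Icc x x₀, (0:ℝ) < t := fun t ht => lt_of_lt_of_le hx ht.1
    set ψ : ℝ → ℝ := fun y => -(deriv φ y) with hψdef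
    have hψsm : ContDiffOn ℝ (⊤ : ℕ∞) ψ (Set.Ioi 0) := (hφ.deriv_of_isOpen isOpen_Ioi (by simp)).neg
    have hψit : ∀ (k : ℕ) (t : ℝ), iteratedDeriv k ψ t = -iteratedDeriv (k+1) φ t := by
      intro k t
      rw [hψdef, iteratedDeriv_fun_neg, ← iteratedDeriv_succ']
    have hypψ : ∀ k : ℕ, k ≠ 0 → ∀ x : ℝ, 0 < x → 0 ≤ (-1:ℝ)^k * iteratedDeriv k ψ x := by
      intro k _ y hy
      rw [hψit k y]
      have := hyp (k+1) (Nat.succ_ne_zero k) y hy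
      rw [pow_succ] at this
      nlinarith [this]
    have ihψ := ih ψ hψsm hypψ x₀
    have hdE : ∀ t ∈ Set.Icc x x₀, HasDerivAt (fun y => φ y - Tc φ x₀ (n+1) y)
        (-(ψ t - Tc ψ x₀ n t)) t := fun t ht => hasDerivAt_E hφ x₀ n (hposIcc t ht)
    have hE0 : φ x₀ - Tc φ x₀ (n+1) x₀ = 0 := by rw [Tc_self]; ring
    have hlow : 0 ≤ φ x - Tc φ x₀ (n+1) x := by
      have hnonpos : ∀ t ∈ Set.Icc x x₀, -(ψ t - Tc ψ x₀ n t) ≤ 0 := by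
        intro t ht
        have := (ihψ t (hposIcc t ht) ht.2).1
        linarith
      have := endpoint_le hxx hdE hnonpos
      linarith
    refine ⟨hlow, ?_⟩
    set A : ℝ := (-1:ℝ)^(n+2) * iteratedDeriv (n+2) φ x with hA
    -- B t := (-1)^(n+2) * iteratedDeriv (n+2) φ t is antitone
    have hBanti : ∀ t ∈ Set.Icc x x₀, (-1:ℝ)^(n+2) * iteratedDeriv (n+2) φ t ≤ A := by
      intro t ht
      have hd2 : ∀ s ∈ Set.Icc x t, HasDerivAt (fun y => (-1:ℝ)^(n+2) * iteratedDeriv (n+2) φ y)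
          ((-1:ℝ)^(n+2) * iteratedDeriv (n+3) φ s) s := by
        intro s hs
        exact (hasDerivAt_iter hφ (n+2) (hposIcc s ⟨hs.1, le_trans hs.2 ht.2⟩)).const_mul _
      have hd2n : ∀ s ∈ Set.Icc x t, (-1:ℝ)^(n+2) * iteratedDeriv (n+3) φ s ≤ 0 := by
        intro s hs
        have h2 := hyp (n+3) (Nat.succ_ne_zero _) s (hposIcc s ⟨hs.1, le_trans hs.2 ht.2⟩)
        rw [pow_succ] at h2
        nlinarith [h2]
      have := endpoint_le ht.1 hd2 hd2n
      rw [hA]; linarith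
    have hfact : ((n+2).factorial : ℝ) = (n+2) * ((n+1).factorial : ℝ) := by
      rw [Nat.factorial_succ]; push_cast; ring
    have hΨd : ∀ t ∈ Set.Icc x x₀, HasDerivAt
        (fun t => A * (x₀ - t)^(n+2) / ((n+2).factorial : ℝ) - (φ t - Tc φ x₀ (n+1) t))
        (-(A * (x₀ - t)^(n+1) / ((n+1).factorial : ℝ)) + (ψ t - Tc ψ x₀ n t)) t := by
      intro t ht
      have hp : HasDerivAt (fun t : ℝ => (x₀ - t)^(n+2)) (((n:ℝ)+2) * (x₀ - t)^(n+1) * (-1)) t := by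
        have := ((hasDerivAt_id t).neg.const_add x₀).fun_pow (n+2)
        simpa [sub_eq_add_neg] using this
      have h1 := (hp.const_mul A).div_const ((n+2).factorial : ℝ)
      have h2 := h1.sub (hdE t ht)
      refine h2.congr_deriv ?_
      rw [hfact]
      have hne : ((n+1).factorial : ℝ) ≠ 0 := by positivity
      field_simp
      ring
    have hΨnonpos : ∀ t ∈ Set.Icc x x₀,
        (-(A * (x₀ - t)^(n+1) / ((n+1).factorial : ℝ)) + (ψ t - Tc ψ x₀ n t)) ≤ 0 := by
      intro t ht
      have hup := (ihψ t (hposIcc t ht) ht.2).2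
      have hsign : (-1:ℝ)^(n+1) * iteratedDeriv (n+1) ψ t = (-1:ℝ)^(n+2) * iteratedDeriv (n+2) φ t := by
        rw [hψit (n+1) t, pow_succ]
        ring
      rw [hsign] at hup
      have hB := hBanti t ht
      have hpow : (0:ℝ) ≤ (x₀ - t)^(n+1) := by
        have : (0:ℝ) ≤ x₀ - t := by linarith [ht.2]
        positivity
      have hfac : (0:ℝ) < ((n+1).factorial : ℝ) := by positivity
      have hmul : (-1:ℝ)^(n+2) * iteratedDeriv (n+2) φ t * (x₀ - t)^(n+1) / ((n+1).factorial : ℝ)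
          ≤ A * (x₀ - t)^(n+1) / ((n+1).factorial : ℝ) := by
        exact div_le_div_of_nonneg_right (mul_le_mul_of_nonneg_right hB hpow) hfac.le
      linarith
    have hfin := endpoint_le hxx hΨd hΨnonpos
    have hΨx₀ : A * (x₀ - x₀)^(n+2) / ((n+2).factorial : ℝ) - (φ x₀ - Tc φ x₀ (n+1) x₀) = 0 := by
      rw [hE0]
      simp [zero_pow (Nat.succ_ne_zero (n+1))]
    rw [hΨx₀] at hfin
    have hgoal : φ x - Tc φ x₀ (n+1) x ≤ A * (x₀ - x)^(n+2) / ((n+2).factorial : ℝ) := by linarith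
    convert hgoal using 2

private lemma summable_abs_series {h : ℝ → ℝ} (hsm : ContDiffOn ℝ (⊤ : ℕ∞) h (Set.Ioi 0))
    (hsg : ∀ k : ℕ, k ≠ 0 → ∀ x : ℝ, 0 < x → 0 ≤ (-1:ℝ)^k * iteratedDeriv k h x)
    {x₀ s : ℝ} (hx₀ : 0 < x₀) (hs0 : 0 ≤ s) (hs : s < x₀) :
    Summable (fun k : ℕ => |iteratedDeriv k h x₀ / (k.factorial : ℝ)| * s^k) := by
  set c : ℕ → ℝ := fun k => iteratedDeriv k h x₀ / (k.factorial : ℝ) with hc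
  set x : ℝ := x₀ - s with hxdef
  have hx : 0 < x := by rw [hxdef]; linarith
  have hxx : x ≤ x₀ := by rw [hxdef]; linarith
  have hterm : ∀ k : ℕ, k ≠ 0 → c k * (x - x₀)^k = |c k| * s^k := by
    intro k hk
    have h1 : x - x₀ = -s := by rw [hxdef]; ring
    have h2 : 0 ≤ (-1:ℝ)^k * c k := by
      have := hsg k hk x₀ hx₀
      have hfac : (0:ℝ) < (k.factorial : ℝ) := by positivity
      rw [hc]
      have : 0 ≤ ((-1:ℝ)^k * iteratedDeriv k h x₀) / (k.factorial : ℝ) :=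
        div_nonneg this hfac.le
      calc (0:ℝ) ≤ ((-1:ℝ)^k * iteratedDeriv k h x₀) / (k.factorial : ℝ) := this
        _ = (-1:ℝ)^k * (iteratedDeriv k h x₀ / (k.factorial : ℝ)) := by ring
    have h3 : (-1:ℝ)^k * c k = |c k| := by
      have := abs_of_nonneg h2
      rw [abs_mul, abs_pow, abs_neg, abs_one, one_pow, one_mul] at this
      linarith
    rw [h1, neg_pow]
    calc c k * ((-1:ℝ)^k * s^k) = ((-1:ℝ)^k * c k) * s^k := by ring
      _ = |c k| * s^k := by rw [h3]
  have hsum_eq : ∀ n : ℕ, ∑ k ∈ Finset.range (n+1), c k * (x - x₀)^k = Tc h x₀ n x := by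
    intro n
    rw [Tc]
    exact Finset.sum_congr rfl fun k _ => by rw [hc]; ring
  have hbound : ∀ n : ℕ, ∑ k ∈ Finset.range n, |c k| * s^k ≤ h x - c 0 + |c 0| := by
    intro n
    have step1 : ∑ k ∈ Finset.range n, |c k| * s^k ≤ ∑ k ∈ Finset.range (n+1), |c k| * s^k := by
      apply Finset.sum_le_sum_of_subset_of_nonneg (Finset.range_subset_range.2 (Nat.le_succ n))
      intro k _ _
      positivity
    have step2 : ∑ k ∈ Finset.range (n+1), |c k| * s^k
        = (∑ k ∈ Finset.range (n+1), c k * (x - x₀)^k) - c 0 + |c 0| := by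
      rw [Finset.sum_range_succ' (fun k => |c k| * s^k) n,
        Finset.sum_range_succ' (fun k => c k * (x - x₀)^k) n]
      have e1 : ∀ k ∈ Finset.range n, |c (k+1)| * s^(k+1) = c (k+1) * (x - x₀)^(k+1) :=
        fun k _ => (hterm (k+1) (Nat.succ_ne_zero k)).symm
      rw [Finset.sum_congr rfl e1]
      simp
    have step3 : Tc h x₀ n x ≤ h x := by
      have := (mainE n h hsm hsg x₀ x hx hxx).1
      linarith
    rw [hsum_eq n] at step2
    calc ∑ k ∈ Finset.range n, |c k| * s^k ≤ ∑ k ∈ Finset.range (n+1), |c k| * s^k := step1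
      _ = Tc h x₀ n x - c 0 + |c 0| := step2
      _ ≤ h x - c 0 + |c 0| := by linarith
  exact summable_of_sum_range_le (fun k => by positivity) hbound

private lemma tsum_taylor_eq {h : ℝ → ℝ} (hsm : ContDiffOn ℝ (⊤ : ℕ∞) h (Set.Ioi 0))
    (hsg : ∀ k : ℕ, k ≠ 0 → ∀ x : ℝ, 0 < x → 0 ≤ (-1:ℝ)^k * iteratedDeriv k h x)
    {x₀ x : ℝ} (hx₀ : 0 < x₀) (hx1 : x₀/2 < x) (hx2 : x < x₀) :
    ∑' k : ℕ, iteratedDeriv k h x₀ / (k.factorial : ℝ) * (x - x₀)^k = h x := by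
  set c : ℕ → ℝ := fun k => iteratedDeriv k h x₀ / (k.factorial : ℝ) with hc
  have hx : 0 < x := by linarith
  have hxx : x ≤ x₀ := hx2.le
  set s : ℝ := x₀ - x with hsdef
  have hs0 : 0 ≤ s := by rw [hsdef]; linarith
  have hss : s < x₀ := by rw [hsdef]; linarith
  -- summability
  have habs := summable_abs_series hsm hsg hx₀ hs0 hss
  have habs' : Summable (fun k : ℕ => |c k * (x - x₀)^k|) := by
    apply habs.congr
    intro k
    rw [abs_mul, abs_pow, abs_sub_comm]
    congr 2
    rw [abs_of_nonneg hs0]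
  have hsummable : Summable (fun k : ℕ => c k * (x - x₀)^k) := by
    rw [← summable_abs_iff]
    exact habs'
  -- limit of partial sums
  have hten := hsummable.hasSum.tendsto_sum_nat
  have hshift : Filter.Tendsto (fun n => ∑ k ∈ Finset.range (n+1), c k * (x - x₀)^k)
      Filter.atTop (nhds (∑' k, c k * (x - x₀)^k)) :=
    hten.comp (Filter.tendsto_add_atTop_nat 1)
  -- partial sums tend to h x
  have hEn : ∀ n : ℕ, ∑ k ∈ Finset.range (n+1), c k * (x - x₀)^k = Tc h x₀ n x := by
    intro n
    rw [Tc]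
    exact Finset.sum_congr rfl fun k _ => by rw [hc]; ring
  -- remainder bound
  have hrem : ∀ n : ℕ, |h x - Tc h x₀ n x| ≤ |iteratedDeriv (n+1) h x / ((n+1).factorial : ℝ)| * s^(n+1) := by
    intro n
    obtain ⟨hlo, hup⟩ := mainE n h hsm hsg x₀ x hx hxx
    rw [abs_of_nonneg hlo]
    have heq : (-1:ℝ)^(n+1) * iteratedDeriv (n+1) h x * (x₀ - x)^(n+1) / ((n+1).factorial : ℝ)
        = ((-1:ℝ)^(n+1) * iteratedDeriv (n+1) h x / ((n+1).factorial : ℝ)) * s^(n+1) := by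
      rw [hsdef]; ring
    have habs2 : (-1:ℝ)^(n+1) * iteratedDeriv (n+1) h x = |iteratedDeriv (n+1) h x| := by
      have h2 := hsg (n+1) (Nat.succ_ne_zero n) x hx
      have := abs_of_nonneg h2
      rw [abs_mul, abs_pow, abs_neg, abs_one, one_pow, one_mul] at this
      linarith
    rw [heq, habs2] at hup
    calc h x - Tc h x₀ n x ≤ |iteratedDeriv (n+1) h x| / ((n+1).factorial : ℝ) * s^(n+1) := by
          convert hup using 2
          try ring
      _ = |iteratedDeriv (n+1) h x / ((n+1).factorial : ℝ)| * s^(n+1) := by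
          rw [abs_div, Nat.abs_cast]
  -- the remainder tends to zero
  have hsx : s < x := by rw [hsdef]; linarith
  have habsx := summable_abs_series hsm hsg hx hs0 hsx
  have hzero : Filter.Tendsto (fun n : ℕ => |iteratedDeriv (n+1) h x / ((n+1).factorial : ℝ)| * s^(n+1))
      Filter.atTop (nhds 0) :=
    habsx.tendsto_atTop_zero.comp (Filter.tendsto_add_atTop_nat 1)
  have htend : Filter.Tendsto (fun n : ℕ => Tc h x₀ n x) Filter.atTop (nhds (h x)) := by
    have hsq : Filter.Tendsto (fun n : ℕ => h x - Tc h x₀ n x) Filter.atTop (nhds 0) := by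
      apply squeeze_zero_norm _ hzero
      intro n
      exact hrem n
    have := (tendsto_const_nhds (x := h x) (f := Filter.atTop (α := ℕ))).sub hsq
    simpa using this
  have htend2 : Filter.Tendsto (fun n => ∑ k ∈ Finset.range (n+1), c k * (x - x₀)^k)
      Filter.atTop (nhds (h x)) := by
    apply htend.congr
    intro n
    exact (hEn n).symm
  exact tendsto_nhds_unique hshift htend2

private lemma log_props {f : ℝ → ℝ} (hsmooth : ContDiffOn ℝ (⊤ : ℕ∞) f (Set.Ioi 0))
    (hpos : ∀ x > (0:ℝ), 0 < f x)
    (hlcm : CompletelyMonotonic (fun x => -(deriv f x / f x))) :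
    ContDiffOn ℝ (⊤ : ℕ∞) (fun x => Real.log (f x)) (Set.Ioi 0) ∧
    ∀ k : ℕ, k ≠ 0 → ∀ x : ℝ, 0 < x →
      0 ≤ (-1:ℝ)^k * iteratedDeriv k (fun x => Real.log (f x)) x := by
  set g : ℝ → ℝ := fun x => -(deriv f x / f x) with hg
  set h : ℝ → ℝ := fun x => Real.log (f x) with hh
  have hsm : ContDiffOn ℝ (⊤ : ℕ∞) h (Set.Ioi 0) :=
    hsmooth.log (fun x hx => (hpos x hx).ne')
  refine ⟨hsm, ?_⟩
  have hEq : Set.EqOn (deriv h) (fun y => -(g y)) (Set.Ioi 0) := by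
    intro y hy
    have hf' : HasDerivAt f (deriv f y) y :=
      ((hsmooth.differentiableOn (by simp)).differentiableAt (Ioi_mem_nhds hy)).hasDerivAt
    have hlog : HasDerivAt h (deriv f y / f y) y := hf'.log (hpos y hy).ne'
    rw [hlog.deriv]
    simp [hg]
  intro k hk x hx
  obtain ⟨m, rfl⟩ := Nat.exists_eq_succ_of_ne_zero hk
  have h1 : iteratedDeriv (m+1) h x = iteratedDeriv m (deriv h) x := by
    rw [iteratedDeriv_succ']
  have h2 : iteratedDeriv m (deriv h) x = iteratedDeriv m (fun y => -(g y)) x :=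
    hEq.iteratedDeriv_of_isOpen isOpen_Ioi m hx
  have h3 : iteratedDeriv m (fun y => -(g y)) x = -iteratedDeriv m g x :=
    iteratedDeriv_neg m g x
  rw [h1, h2, h3]
  have h4 := hlcm.2 m x hx
  rw [pow_succ]
  nlinarith [h4]

private lemma F_diffOn {μ : Measure ℝ} (hμ : μ (Set.Iio 0) = 0)
    (hint : ∀ z : ℂ, 0 < z.re → Integrable (fun t : ℝ => Complex.exp (-z * t)) μ) :
    DifferentiableOn ℂ (fun z => ∫ t : ℝ, Complex.exp (-z * t) ∂μ) {z : ℂ | 0 < z.re} := by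
  intro z₀ hz₀
  have ha : (0:ℝ) < z₀.re := hz₀
  set a : ℝ := z₀.re with hadef
  have haet : ∀ᵐ t ∂μ, (0:ℝ) ≤ t := by
    rw [ae_iff]
    convert hμ using 2
    ext t
    simp [not_le]
  have hcont : ∀ z : ℂ, Continuous (fun t : ℝ => Complex.exp (-z * t)) := by
    intro z
    fun_prop
  have hcont' : Continuous (fun t : ℝ => -(t:ℂ) * Complex.exp (-z₀ * t)) := by
    fun_prop
  have key := hasDerivAt_integral_of_dominated_loc_of_deriv_le
    (F := fun (z : ℂ) (t : ℝ) => Complex.exp (-z * t))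
    (F' := fun (z : ℂ) (t : ℝ) => -(t:ℂ) * Complex.exp (-z * t))
    (x₀ := z₀) (s := Metric.ball z₀ (a/4)) (bound := fun t => (4/a) * Real.exp (-(a/2) * t))
    (Metric.ball_mem_nhds _ (by positivity))
    (Filter.Eventually.of_forall fun z => (hcont z).aestronglyMeasurable)
    (hint z₀ hz₀)
    hcont'.aestronglyMeasurable
    ?_ ?_ ?_
  · exact key.2.differentiableAt.differentiableWithinAt
  · -- bound
    filter_upwards [haet] with t ht
    intro z hzb
    have hre : (3*a/4) ≤ z.re := by
      have h1 : |(z - z₀).re| ≤ ‖z - z₀‖ := Complex.abs_re_le_norm _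
      have h2 : ‖z - z₀‖ < a/4 := by
        rw [← Complex.dist_eq]
        exact hzb
      have h3 : (z - z₀).re = z.re - a := by simp [Complex.sub_re, hadef]
      rw [h3] at h1
      have := abs_lt.1 (lt_of_le_of_lt h1 h2)
      linarith [this.1]
    have hnorm : ‖-(t:ℂ) * Complex.exp (-z * t)‖ = t * Real.exp (-z.re * t) := by
      rw [norm_mul]
      have e1 : ‖(-(t:ℂ))‖ = t := by
        rw [norm_neg, Complex.norm_real, Real.norm_eq_abs, abs_of_nonneg ht]
      have e2 : ‖Complex.exp (-z * t)‖ = Real.exp (-z.re * t) := by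
        rw [Complex.norm_exp]
        congr 1
        simp [Complex.mul_re]
      rw [e1, e2]
    rw [hnorm]
    have step1 : t * Real.exp (-z.re * t) ≤ t * Real.exp (-(3*a/4) * t) := by
      apply mul_le_mul_of_nonneg_left _ ht
      apply Real.exp_le_exp.2
      nlinarith
    have key2 : t * Real.exp (-(a/4)*t) ≤ 4/a := by
      have h1 : (a/4)*t + 1 ≤ Real.exp ((a/4)*t) := Real.add_one_le_exp _
      have h2 : (0:ℝ) < Real.exp ((a/4)*t) := Real.exp_pos _
      rw [show (-(a/4)*t) = -((a/4)*t) by ring, Real.exp_neg]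
      rw [mul_inv_le_iff₀ h2]
      have : (0:ℝ) ≤ t := ht
      rw [div_mul_eq_mul_div, le_div_iff₀ (by positivity : (0:ℝ) < a)]
      nlinarith
    have step2 : t * Real.exp (-(3*a/4) * t) = (t * Real.exp (-(a/4)*t)) * Real.exp (-(a/2)*t) := by
      rw [mul_assoc, ← Real.exp_add]
      ring_nf
    calc t * Real.exp (-z.re * t) ≤ t * Real.exp (-(3*a/4) * t) := step1
      _ = (t * Real.exp (-(a/4)*t)) * Real.exp (-(a/2)*t) := step2
      _ ≤ (4/a) * Real.exp (-(a/2)*t) :=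
          mul_le_mul_of_nonneg_right key2 (Real.exp_pos _).le
  · -- integrability of bound
    have hre : (0:ℝ) < ((a/2 : ℝ) : ℂ).re := by simpa using by positivity
    have hi := (hint ((a/2 : ℝ) : ℂ) hre).norm
    have : (fun t : ℝ => ‖Complex.exp (-((a/2:ℝ):ℂ) * t)‖) = fun t => Real.exp (-(a/2) * t) := by
      funext t
      rw [Complex.norm_exp]
      congr 1
      simp [Complex.mul_re]
    rw [this] at hi
    exact hi.const_mul _
  · -- differentiability
    apply Filter.Eventually.of_forall
    intro t z _
    have hd1 : HasDerivAt (fun z : ℂ => -z * (t:ℂ)) (-(t:ℂ)) z := by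
      simpa using ((hasDerivAt_id z).neg.mul_const ((t:ℂ)))
    have := hd1.cexp
    refine this.congr_deriv ?_
    ring

private lemma F_real {μ : Measure ℝ} {f : ℝ → ℝ}
    (hrep : ∀ x > (0:ℝ), f x = ∫ t : ℝ, Real.exp (-x * t) ∂μ)
    {x : ℝ} (hx : 0 < x) :
    ∫ t : ℝ, Complex.exp (-(x:ℂ) * t) ∂μ = ((f x : ℝ) : ℂ) := by
  have e1 : ∀ t : ℝ, Complex.exp (-(x:ℂ) * t) = ((Real.exp (-x * t) : ℝ) : ℂ) := by
    intro t
    rw [Complex.ofReal_exp]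
    congr 1
    push_cast
    ring
  calc ∫ t : ℝ, Complex.exp (-(x:ℂ) * t) ∂μ
      = ∫ t : ℝ, ((Real.exp (-x * t) : ℝ) : ℂ) ∂μ := by simp_rw [e1]
    _ = ((∫ t : ℝ, Real.exp (-x * t) ∂μ : ℝ) : ℂ) := integral_ofReal
    _ = ((f x : ℝ) : ℂ) := by rw [← hrep x hx]

/-- A logarithmically completely monotonic function has a zero-free holomorphic extension
(given by the Laplace transform of its Bernstein representing measure) to the right
half-plane. -/
theorem lcm_extension_no_zeros (f : ℝ → ℝ)
    (hsmooth : ContDiffOn ℝ (⊤ : ℕ∞) f (Set.Ioi 0))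
    (hpos : ∀ x > (0:ℝ), 0 < f x)
    (hlcm : CompletelyMonotonic (fun x => -(deriv f x / f x)))
    (μ : Measure ℝ) (hμ : μ (Set.Iio 0) = 0)
    (hint : ∀ z : ℂ, 0 < z.re → Integrable (fun t : ℝ => Complex.exp (-z * t)) μ)
    (hrep : ∀ x > (0:ℝ), f x = ∫ t : ℝ, Real.exp (-x * t) ∂μ) :
    ∀ z : ℂ, 0 < z.re → (∫ t : ℝ, Complex.exp (-z * t) ∂μ) ≠ 0 := by
  obtain ⟨hsmh, hsgh⟩ := log_props hsmooth hpos hlcm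
  intro z hz
  set h : ℝ → ℝ := fun x => Real.log (f x) with hhdef
  set F : ℂ → ℂ := fun w => ∫ t : ℝ, Complex.exp (-w * t) ∂μ with hFdef
  show F z ≠ 0
  have hopen : IsOpen {w : ℂ | 0 < w.re} := isOpen_lt continuous_const Complex.continuous_re
  have hFanal : AnalyticOnNhd ℂ F {w : ℂ | 0 < w.re} := (F_diffOn hμ hint).analyticOnNhd hopen
  set x₀ : ℝ := ‖z‖^2 / (2*z.re) + 1 with hx₀def
  have hq : 0 ≤ ‖z‖^2 / (2*z.re) := div_nonneg (by positivity) (by linarith)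
  have hx₀ : 0 < x₀ := by rw [hx₀def]; linarith
  have hzball : z ∈ Metric.ball ((x₀:ℝ):ℂ) x₀ := by
    rw [Metric.mem_ball, Complex.dist_eq]
    have hsq : (‖z - (x₀:ℂ)‖)^2 < x₀^2 := by
      have e1 : ‖z‖^2 = z.re^2 + z.im^2 := by
        rw [Complex.sq_norm, Complex.normSq_apply]; ring
      have e2 : (‖z - (x₀:ℂ)‖)^2 = (z.re - x₀)^2 + z.im^2 := by
        rw [Complex.sq_norm, Complex.normSq_apply, Complex.sub_re, Complex.sub_im,
          Complex.ofReal_re, Complex.ofReal_im]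
        ring
      have e3 : 2 * x₀ * z.re = ‖z‖^2 + 2*z.re := by
        rw [hx₀def]
        field_simp
      nlinarith [e1, e2, e3, hz]
    exact lt_of_pow_lt_pow_left₀ 2 hx₀.le hsq
  have hball_sub : Metric.ball ((x₀:ℝ):ℂ) x₀ ⊆ {w : ℂ | 0 < w.re} := by
    intro w hw
    rw [Metric.mem_ball, Complex.dist_eq] at hw
    have h1 : |(w - (x₀:ℂ)).re| ≤ ‖w - (x₀:ℂ)‖ := Complex.abs_re_le_norm _
    have h2 : (w - (x₀:ℂ)).re = w.re - x₀ := by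
      rw [Complex.sub_re, Complex.ofReal_re]
    rw [h2] at h1
    have := abs_lt.1 (lt_of_le_of_lt h1 hw)
    simp only [Set.mem_setOf_eq]
    linarith [this.1]
  set c : ℕ → ℝ := fun k => iteratedDeriv k h x₀ / (k.factorial : ℝ) with hcdef
  set p : FormalMultilinearSeries ℂ ℂ ℂ :=
    FormalMultilinearSeries.ofScalars ℂ (fun k => ((c k : ℝ) : ℂ)) with hpdef
  have hpn : ∀ n : ℕ, ‖p n‖ = |c n| := by
    intro n
    rw [hpdef, FormalMultilinearSeries.ofScalars_norm, Complex.norm_real, Real.norm_eq_abs]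
  have hrad : ENNReal.ofReal x₀ ≤ p.radius := by
    apply ENNReal.le_of_forall_nnreal_lt
    intro r hr
    have hrlt : (r : ℝ) < x₀ := by
      rw [ENNReal.ofReal] at hr
      have h1 := ENNReal.coe_lt_coe.1 hr
      have h2 := (NNReal.coe_lt_coe (r₁ := r)).2 h1
      rwa [Real.coe_toNNReal _ hx₀.le] at h2
    apply p.le_radius_of_summable
    apply Summable.congr (summable_abs_series hsmh hsgh hx₀ r.coe_nonneg hrlt)
    intro n
    rw [hpn]
  have hradpos : (0:ENNReal) < p.radius :=
    lt_of_lt_of_le (ENNReal.ofReal_pos.2 hx₀) hrad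
  have hFP := p.hasFPowerSeriesOnBall hradpos
  set H : ℂ → ℂ := fun w => p.sum (w - ((x₀:ℝ):ℂ)) with hHdef
  have hmem : ∀ w ∈ Metric.ball ((x₀:ℝ):ℂ) x₀, (w - ((x₀:ℝ):ℂ)) ∈ Metric.eball (0:ℂ) p.radius := by
    intro w hw
    rw [mem_emetric_ball_zero_iff]
    rw [Metric.mem_ball, dist_eq_norm] at hw
    calc (‖w - ((x₀:ℝ):ℂ)‖₊ : ℝ≥0∞) = ENNReal.ofReal ‖w - ((x₀:ℝ):ℂ)‖ :=
          (ofReal_norm _).symm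
      _ < ENNReal.ofReal x₀ := (ENNReal.ofReal_lt_ofReal_iff hx₀).2 hw
      _ ≤ p.radius := hrad
  have hHanalAt : ∀ w ∈ Metric.ball ((x₀:ℝ):ℂ) x₀, AnalyticAt ℂ H w := by
    intro w hw
    have h1 : AnalyticAt ℂ p.sum (w - ((x₀:ℝ):ℂ)) := by
      apply hFP.analyticAt_of_mem
      simpa using hmem w hw
    have h2 : AnalyticAt ℂ (fun w : ℂ => w - ((x₀:ℝ):ℂ)) w :=
      (analyticAt_id).sub analyticAt_const
    exact AnalyticAt.comp (f := fun w : ℂ => w - ((x₀:ℝ):ℂ)) (g := p.sum) (x := w) h1 h2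
  have hEanal : AnalyticOnNhd ℂ (fun w => Complex.exp (H w)) (Metric.ball ((x₀:ℝ):ℂ) x₀) :=
    fun w hw => (hHanalAt w hw).cexp
  have hHreal : ∀ y : ℝ, x₀/2 < y → y < x₀ → H ((y:ℝ):ℂ) = ((h y : ℝ) : ℂ) := by
    intro y hy1 hy2
    have hsum : p.sum (((y:ℝ):ℂ) - ((x₀:ℝ):ℂ)) = ∑' k : ℕ, ((c k : ℝ):ℂ) * (((y:ℝ):ℂ) - ((x₀:ℝ):ℂ))^k := by
      rw [FormalMultilinearSeries.sum]
      apply tsum_congr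
      intro k
      rw [hpdef, FormalMultilinearSeries.ofScalars_apply_eq, smul_eq_mul]
    have hcast : (((y:ℝ):ℂ) - ((x₀:ℝ):ℂ)) = (((y - x₀ : ℝ)) : ℂ) := by push_cast; ring
    rw [hHdef]
    simp only []
    rw [hsum, hcast]
    have e1 : ∀ k : ℕ, ((c k:ℝ):ℂ) * (((y - x₀:ℝ)):ℂ)^k = (((c k * (y-x₀)^k : ℝ)) : ℂ) := by
      intro k; push_cast; ring
    rw [tsum_congr e1, ← Complex.ofReal_tsum]
    congr 1
    exact tsum_taylor_eq hsmh hsgh hx₀ hy1 hy2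
  set u : ℕ → ℂ := fun n => ((x₀ - x₀/((n:ℝ)+3) : ℝ) : ℂ) with hudef
  have huprop : ∀ n : ℕ, x₀/2 < x₀ - x₀/((n:ℝ)+3) ∧ x₀ - x₀/((n:ℝ)+3) < x₀ := by
    intro n
    constructor
    · have hle : x₀/((n:ℝ)+3) ≤ x₀/3 := by
        apply div_le_div_of_nonneg_left hx₀.le (by norm_num)
        · push_cast; linarith [Nat.cast_nonneg (α := ℝ) n]
      have : x₀/3 < x₀/2 := by linarith
      linarith
    · have : 0 < x₀/((n:ℝ)+3) := by positivity
      linarith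
  have huF : ∀ n : ℕ, F (u n) = Complex.exp (H (u n)) := by
    intro n
    obtain ⟨h1, h2⟩ := huprop n
    have hy0 : 0 < x₀ - x₀/((n:ℝ)+3) := by
      have : 0 < x₀/2 := by linarith
      linarith
    have hFr : F ((x₀ - x₀/((n:ℝ)+3) : ℝ) : ℂ) = ((f (x₀ - x₀/((n:ℝ)+3)) : ℝ) : ℂ) :=
      F_real hrep hy0
    rw [hudef]
    simp only []
    rw [hFr, hHreal _ h1 h2, ← Complex.ofReal_exp]
    congr 1
    rw [hhdef]
    simp only []
    rw [Real.exp_log (hpos _ hy0)]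
  have hutend : Filter.Tendsto u Filter.atTop (nhdsWithin ((x₀:ℝ):ℂ) {((x₀:ℝ):ℂ)}ᶜ) := by
    rw [tendsto_nhdsWithin_iff]
    constructor
    · have hd : Filter.Tendsto (fun n : ℕ => (n:ℝ)+3) Filter.atTop Filter.atTop :=
        Filter.tendsto_atTop_add_const_right _ 3 tendsto_natCast_atTop_atTop
      have h0 : Filter.Tendsto (fun n : ℕ => x₀/((n:ℝ)+3)) Filter.atTop (nhds 0) :=
        Filter.Tendsto.div_atTop tendsto_const_nhds hd
      have hr : Filter.Tendsto (fun n : ℕ => x₀ - x₀/((n:ℝ)+3)) Filter.atTop (nhds x₀) := by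
        have := tendsto_const_nhds (x := x₀) (f := Filter.atTop (α := ℕ)) |>.sub h0
        simpa using this
      exact (Complex.continuous_ofReal.tendsto x₀).comp hr
    · apply Filter.Eventually.of_forall
      intro n
      simp only [hudef, Set.mem_compl_iff, Set.mem_singleton_iff]
      intro hcon
      have hinj := Complex.ofReal_injective hcon
      have hpos' : (0:ℝ) < x₀/((n:ℝ)+3) := by positivity
      linarith [hinj]
  have hfreq : ∃ᶠ w in nhdsWithin ((x₀:ℝ):ℂ) {((x₀:ℝ):ℂ)}ᶜ, F w = Complex.exp (H w) :=
    hutend.frequently (Filter.Frequently.of_forall huF)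
  have hEqOn := (hFanal.mono hball_sub).eqOn_of_preconnected_of_frequently_eq hEanal
    (convex_ball ((x₀:ℝ):ℂ) x₀).isPreconnected (Metric.mem_ball_self hx₀) hfreq
  rw [hEqOn hzball]
  exact Complex.exp_ne_zero _
end

section
/- A function f : (0,∞) → ℝ is a Bernstein function (f ≥ 0 and f' completely monotonic) if and only if f ≥ 0 and for every x > 0 the function t ↦ e^{−x f(t)} is completely monotonic on (0,∞). -/
open MeasureTheory Set

open Filter Topology

private lemma smoothOn_iteratedDeriv {u : ℝ → ℝ} {s : Set ℝ} (hs : IsOpen s)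
    (hu : ContDiffOn ℝ (⊤ : ℕ∞) u s) (n : ℕ) : ContDiffOn ℝ (⊤ : ℕ∞) (iteratedDeriv n u) s := by
  induction n with
  | zero => simpa [iteratedDeriv_zero] using hu
  | succ n ih => rw [iteratedDeriv_succ]; exact ih.deriv_of_isOpen hs (by simp)

private lemma diffAt_iteratedDeriv {u : ℝ → ℝ} {s : Set ℝ} (hs : IsOpen s)
    (hu : ContDiffOn ℝ (⊤ : ℕ∞) u s) (n : ℕ) {x : ℝ} (hx : x ∈ s) :
    DifferentiableAt ℝ (iteratedDeriv n u) x :=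
  ((smoothOn_iteratedDeriv hs hu n).contDiffAt (hs.mem_nhds hx)).differentiableAt (by simp)

private lemma iteratedDeriv_const_mul_open {u : ℝ → ℝ} {s : Set ℝ} (hs : IsOpen s)
    (hu : ContDiffOn ℝ (⊤ : ℕ∞) u s) (c : ℝ) (n : ℕ) :
    ∀ x ∈ s, iteratedDeriv n (fun t => c * u t) x = c * iteratedDeriv n u x := by
  induction n with
  | zero => simp [iteratedDeriv_zero]
  | succ n ih =>
    intro x hx
    rw [iteratedDeriv_succ, iteratedDeriv_succ]
    have h1 : iteratedDeriv n (fun t => c * u t) =ᶠ[𝓝 x] fun t => c * iteratedDeriv n u t :=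
      eventually_of_mem (hs.mem_nhds hx) fun y hy => ih y hy
    rw [h1.deriv_eq, deriv_const_mul _ (diffAt_iteratedDeriv hs hu n hx)]

private lemma iteratedDeriv_mul_open {u v : ℝ → ℝ} {s : Set ℝ} (hs : IsOpen s)
    (hu : ContDiffOn ℝ (⊤ : ℕ∞) u s) (hv : ContDiffOn ℝ (⊤ : ℕ∞) v s) (n : ℕ) :
    ∀ x ∈ s, iteratedDeriv n (fun t => u t * v t) x =
      ∑ k ∈ Finset.range (n + 1),
        (n.choose k : ℝ) * (iteratedDeriv k u x * iteratedDeriv (n - k) v x) := by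
  induction n with
  | zero => intro x hx; simp [iteratedDeriv_zero]
  | succ n ih =>
    intro x hx
    rw [iteratedDeriv_succ]
    have h1 : iteratedDeriv n (fun t => u t * v t) =ᶠ[𝓝 x]
        fun y => ∑ k ∈ Finset.range (n + 1),
          (n.choose k : ℝ) * (iteratedDeriv k u y * iteratedDeriv (n - k) v y) :=
      eventually_of_mem (hs.mem_nhds hx) fun y hy => ih y hy
    rw [h1.deriv_eq]
    have hterm : ∀ k ∈ Finset.range (n + 1), HasDerivAt
        (fun y => (n.choose k : ℝ) * (iteratedDeriv k u y * iteratedDeriv (n - k) v y))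
        ((n.choose k : ℝ) * (iteratedDeriv (k+1) u x * iteratedDeriv (n - k) v x
          + iteratedDeriv k u x * iteratedDeriv (n - k + 1) v x)) x := by
      intro k _
      have h2 : HasDerivAt (iteratedDeriv k u) (iteratedDeriv (k+1) u x) x := by
        rw [iteratedDeriv_succ]
        exact (diffAt_iteratedDeriv hs hu k hx).hasDerivAt
      have h3 : HasDerivAt (iteratedDeriv (n-k) v) (iteratedDeriv (n-k+1) v x) x := by
        rw [iteratedDeriv_succ]
        exact (diffAt_iteratedDeriv hs hv (n-k) hx).hasDerivAt
      exact ((h2.mul h3).const_mul _)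
    have hsum := HasDerivAt.fun_sum hterm
    rw [hsum.deriv]
    -- now pure algebra
    set A : ℕ → ℕ → ℝ := fun i j => iteratedDeriv i u x * iteratedDeriv j v x with hA
    have lhs_eq : ∑ k ∈ Finset.range (n + 1), (n.choose k : ℝ) *
          (iteratedDeriv (k+1) u x * iteratedDeriv (n - k) v x
            + iteratedDeriv k u x * iteratedDeriv (n - k + 1) v x)
        = (∑ k ∈ Finset.range (n + 1), (n.choose k : ℝ) * A (k+1) (n-k))
          + ∑ k ∈ Finset.range (n + 1), (n.choose k : ℝ) * A k (n-k+1) := by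
      rw [← Finset.sum_add_distrib]; apply Finset.sum_congr rfl; intro k _; ring
    rw [lhs_eq]
    have e2 : ∑ k ∈ Finset.range (n + 1), (n.choose k : ℝ) * A k (n-k+1)
        = (∑ k ∈ Finset.range n, (n.choose (k+1) : ℝ) * A (k+1) (n-k))
          + A 0 (n+1) := by
      rw [Finset.sum_range_succ']
      congr 1
      · apply Finset.sum_congr rfl; intro k hk
        have hk' : k + 1 ≤ n := Nat.succ_le_of_lt (Finset.mem_range.mp hk)
        congr 2
        omega
      · simp
    have e3 : ∑ k ∈ Finset.range n, (n.choose (k+1) : ℝ) * A (k+1) (n-k)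
        = ∑ k ∈ Finset.range (n+1), (n.choose (k+1) : ℝ) * A (k+1) (n-k) := by
      rw [Finset.sum_range_succ, Nat.choose_succ_self]; simp
    have target : ∑ k ∈ Finset.range (n + 1 + 1),
        ((n+1).choose k : ℝ) * (iteratedDeriv k u x * iteratedDeriv (n + 1 - k) v x)
        = (∑ k ∈ Finset.range (n+1), ((n+1).choose (k+1) : ℝ) * A (k+1) (n-k)) + A 0 (n+1) := by
      rw [Finset.sum_range_succ']
      congr 1
      · apply Finset.sum_congr rfl; intro k hk
        have : n + 1 - (k+1) = n - k := by omega
        rw [hA]; simp only []; rw [this]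
      · simp [hA, iteratedDeriv_zero]
    rw [target, e2, e3, ← add_assoc, ← Finset.sum_add_distrib]
    congr 1
    apply Finset.sum_congr rfl; intro k _
    rw [Nat.choose_succ_succ]
    push_cast
    ring

private lemma exp_smooth {f : ℝ → ℝ} (hf : ContDiffOn ℝ (⊤ : ℕ∞) f (Ioi 0)) (x : ℝ) :
    ContDiffOn ℝ (⊤ : ℕ∞) (fun t => Real.exp (-(x * f t))) (Ioi 0) :=
  Real.contDiff_exp.comp_contDiffOn ((contDiffOn_const.mul hf).neg)

private lemma exp_hasDerivAt {f : ℝ → ℝ} (hf : ContDiffOn ℝ (⊤ : ℕ∞) f (Ioi 0)) (x : ℝ) {t : ℝ}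
    (ht : t ∈ Ioi 0) :
    HasDerivAt (fun t => Real.exp (-(x * f t)))
      ((-x) * (deriv f t * Real.exp (-(x * f t)))) t := by
  have hft : HasDerivAt f (deriv f t) t :=
    ((hf.contDiffAt (isOpen_Ioi.mem_nhds ht)).differentiableAt (by simp)).hasDerivAt
  have h1 : HasDerivAt (fun t => -(x * f t)) (-(x * deriv f t)) t := (hft.const_mul x).neg
  have h2 := h1.exp
  convert h2 using 1
  ring

private lemma forward {f : ℝ → ℝ} (hf : ContDiffOn ℝ (⊤ : ℕ∞) f (Ioi 0))
    (hcm : CompletelyMonotonic (deriv f)) {x : ℝ} (hx : 0 < x) :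
    CompletelyMonotonic (fun t => Real.exp (-(x * f t))) := by
  obtain ⟨hdf, hsign⟩ := hcm
  set h : ℝ → ℝ := fun t => Real.exp (-(x * f t)) with hh
  have hhsm : ContDiffOn ℝ (⊤ : ℕ∞) h (Ioi 0) := exp_smooth hf x
  refine ⟨hhsm, ?_⟩
  intro n
  induction n using Nat.strong_induction_on with
  | _ n IH =>
    intro t ht
    match n, IH with
    | 0, _ => simpa [iteratedDeriv_zero, hh] using Real.exp_nonneg (-(x * f t))
    | (n+1), IH =>
      have hmul : ContDiffOn ℝ (⊤ : ℕ∞) (fun t => deriv f t * h t) (Ioi 0) := hdf.mul hhsm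
      have heq : iteratedDeriv (n+1) h t
          = (-x) * ∑ k ∈ Finset.range (n + 1),
              (n.choose k : ℝ) * (iteratedDeriv k (deriv f) t * iteratedDeriv (n - k) h t) := by
        rw [iteratedDeriv_succ']
        have hev : deriv h =ᶠ[𝓝 t] fun y => (-x) * (deriv f y * h y) :=
          eventually_of_mem (isOpen_Ioi.mem_nhds ht) fun y hy =>
            (exp_hasDerivAt hf x hy).deriv
        rw [hev.iteratedDeriv_eq n,
          iteratedDeriv_const_mul_open isOpen_Ioi hmul (-x) n t ht,
          iteratedDeriv_mul_open isOpen_Ioi hdf hhsm n t ht]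
      rw [heq]
      have key : (-1:ℝ)^(n+1) * ((-x) * ∑ k ∈ Finset.range (n + 1),
            (n.choose k : ℝ) * (iteratedDeriv k (deriv f) t * iteratedDeriv (n - k) h t))
          = x * ∑ k ∈ Finset.range (n + 1), (n.choose k : ℝ) *
              (((-1:ℝ)^k * iteratedDeriv k (deriv f) t)
                * ((-1:ℝ)^(n-k) * iteratedDeriv (n - k) h t)) := by
        rw [Finset.mul_sum, Finset.mul_sum, Finset.mul_sum]
        apply Finset.sum_congr rfl
        intro k hk
        have hk' : k ≤ n := Nat.lt_succ_iff.mp (Finset.mem_range.mp hk)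
        have hpow : (-1:ℝ)^k * (-1:ℝ)^(n-k) = (-1:ℝ)^n := by
          rw [← pow_add]
          congr 1
          omega
        have hpow' : (-1:ℝ)^(n+1) * (-1:ℝ) = (-1:ℝ)^n * ((-1:ℝ)*(-1:ℝ)) := by
          rw [pow_succ]; ring
        rw [pow_succ]
        linear_combination (-(x * (n.choose k : ℝ)) * iteratedDeriv k (deriv f) t
          * iteratedDeriv (n - k) h t) * hpow
      rw [key]
      refine mul_nonneg hx.le (Finset.sum_nonneg fun k hk => ?_)
      exact mul_nonneg (Nat.cast_nonneg _)
        (mul_nonneg (hsign k t ht) (IH (n-k) (by omega) t ht))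

private lemma struct {f : ℝ → ℝ} (hf : ContDiffOn ℝ (⊤ : ℕ∞) f (Ioi 0)) (m : ℕ) :
    ∃ c : ℕ → ℝ → ℝ,
      (∀ i, ContDiffOn ℝ (⊤ : ℕ∞) (c i) (Ioi 0)) ∧
      (c 0 = fun _ => if m = 0 then 1 else 0) ∧
      (1 ≤ m → ∀ t ∈ Ioi 0, c 1 t = -iteratedDeriv m f t) ∧
      (∀ i, m + 1 ≤ i → c i = fun _ => 0) ∧
      (∀ x : ℝ, ∀ t ∈ Ioi 0, iteratedDeriv m (fun t => Real.exp (-(x * f t))) t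
        = Real.exp (-(x * f t)) * ∑ i ∈ Finset.range (m + 1), c i t * x ^ i) := by
  induction m with
  | zero =>
    refine ⟨fun i => if i = 0 then (fun _ => 1) else (fun _ => 0), ?_, ?_, ?_, ?_, ?_⟩
    · intro i; by_cases hi : i = 0 <;> simp [hi] <;> exact contDiffOn_const
    · simp
    · omega
    · intro i hi
      have : i ≠ 0 := by omega
      simp [this]
    · intro x t _; simp [iteratedDeriv_zero]
  | succ m ih =>
    obtain ⟨c, hc_sm, hc0, hc1, hctop, hcmain⟩ := ih
    have hfderiv : ContDiffOn ℝ (⊤ : ℕ∞) (deriv f) (Ioi 0) := hf.deriv_of_isOpen isOpen_Ioi (by simp)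
    refine ⟨fun i => if i = 0 then (fun _ => 0)
        else fun t => deriv (c i) t - deriv f t * c (i-1) t, ?_, ?_, ?_, ?_, ?_⟩
    · intro i
      by_cases hi : i = 0
      · simp [hi]; exact contDiffOn_const
      · simp only [hi, if_neg, ite_false]
        exact ((hc_sm i).deriv_of_isOpen isOpen_Ioi (by simp)).sub (hfderiv.mul (hc_sm (i-1)))
    · simp
    · intro _ t ht
      simp only [one_ne_zero, ite_false]
      rcases Nat.eq_zero_or_pos m with hm | hm
      · subst hm
        rw [hctop 1 le_rfl, hc0]
        simp [iteratedDeriv_one]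
      · have hev : c 1 =ᶠ[𝓝 t] fun y => -iteratedDeriv m f y :=
          eventually_of_mem (isOpen_Ioi.mem_nhds ht) fun y hy => hc1 hm y hy
        rw [hev.deriv_eq, hc0, if_neg (by omega)]
        have : deriv (fun y => -iteratedDeriv m f y) t = -deriv (iteratedDeriv m f) t := by
          simp [deriv.neg]
        rw [this, ← iteratedDeriv_succ]
        ring
    · intro i hi
      have hi0 : i ≠ 0 := by omega
      simp only [hi0, ite_false]
      funext t
      rw [hctop i (by omega), hctop (i-1) (by omega)]
      simp
    · intro x t ht
      set h : ℝ → ℝ := fun t => Real.exp (-(x * f t)) with hh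
      have hev : iteratedDeriv m h =ᶠ[𝓝 t]
          fun y => h y * ∑ i ∈ Finset.range (m + 1), c i y * x ^ i :=
        eventually_of_mem (isOpen_Ioi.mem_nhds ht) fun y hy => hcmain x y hy
      rw [iteratedDeriv_succ, hev.deriv_eq]
      have hH : HasDerivAt h ((-x) * (deriv f t * h t)) t := exp_hasDerivAt hf x ht
      have hS : HasDerivAt (fun y => ∑ i ∈ Finset.range (m + 1), c i y * x ^ i)
          (∑ i ∈ Finset.range (m + 1), deriv (c i) t * x ^ i) t := by
        apply HasDerivAt.fun_sum
        intro i _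
        exact (((hc_sm i).contDiffAt (isOpen_Ioi.mem_nhds ht)).differentiableAt
          (by simp)).hasDerivAt.mul_const _
      rw [(hH.fun_mul hS).deriv]
      -- algebra
      have hc0' : deriv (c 0) t = 0 := by rw [hc0]; simp
      have hcm1 : c (m+1) = fun _ => 0 := hctop (m+1) le_rfl
      have e1 : ∑ i ∈ Finset.range (m + 1 + 1),
            (if i = 0 then (fun _ : ℝ => (0:ℝ))
              else fun t => deriv (c i) t - deriv f t * c (i-1) t) t * x ^ i
          = ∑ i ∈ Finset.range (m + 1), (deriv (c (i+1)) t - deriv f t * c i t) * x ^ (i+1) := by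
        rw [Finset.sum_range_succ']
        simp
      have e2 : ∑ i ∈ Finset.range (m + 1), deriv (c i) t * x ^ i
          = ∑ i ∈ Finset.range m, deriv (c (i+1)) t * x ^ (i+1) := by
        rw [Finset.sum_range_succ']
        simp [hc0']
      have e3 : ∑ i ∈ Finset.range (m+1), deriv (c (i+1)) t * x ^ (i+1)
          = ∑ i ∈ Finset.range m, deriv (c (i+1)) t * x ^ (i+1) := by
        rw [Finset.sum_range_succ, hcm1]
        simp
      rw [e1]
      have e4 : ∑ i ∈ Finset.range (m + 1), (deriv (c (i+1)) t - deriv f t * c i t) * x ^ (i+1)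
          = (∑ i ∈ Finset.range (m+1), deriv (c (i+1)) t * x ^ (i+1))
            - x * deriv f t * ∑ i ∈ Finset.range (m+1), c i t * x ^ i := by
        rw [Finset.mul_sum, ← Finset.sum_sub_distrib]
        apply Finset.sum_congr rfl
        intro i _
        ring
      rw [e4, e3, ← e2]
      ring

private lemma backward_sign {f : ℝ → ℝ} (hf : ContDiffOn ℝ (⊤ : ℕ∞) f (Ioi 0))
    (hcm : ∀ x > (0:ℝ), CompletelyMonotonic (fun t => Real.exp (-(x * f t))))
    (n : ℕ) {t : ℝ} (ht : 0 < t) : 0 ≤ (-1:ℝ)^n * iteratedDeriv n (deriv f) t := by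
  obtain ⟨c, hc_sm, hc0, hc1, hctop, hcmain⟩ := struct hf (n+1)
  set q : ℝ → ℝ := fun x => ∑ i ∈ Finset.range (n+1), ((-1:ℝ)^(n+1) * c (i+1) t) * x^i with hq
  have hq_nonneg : ∀ x, 0 < x → 0 ≤ q x := by
    intro x hx
    have h1 := (hcm x hx).2 (n+1) t ht
    rw [hcmain x t ht] at h1
    have hE : 0 < Real.exp (-(x * f t)) := Real.exp_pos _
    have h2 : 0 ≤ (-1:ℝ)^(n+1) * ∑ i ∈ Finset.range (n+2), c i t * x^i := by
      by_contra hneg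
      push_neg at hneg
      have := mul_pos hE (neg_pos.mpr hneg)
      nlinarith
    have h3 : (-1:ℝ)^(n+1) * ∑ i ∈ Finset.range (n+2), c i t * x^i = x * q x := by
      rw [Finset.sum_range_succ' (fun i => c i t * x^i) (n+1), hc0]
      simp only [Nat.succ_ne_zero, ite_false, zero_mul, add_zero, pow_zero, mul_one]
      rw [hq, Finset.mul_sum, Finset.mul_sum]
      apply Finset.sum_congr rfl
      intro i _
      ring
    rw [h3] at h2
    exact nonneg_of_mul_nonneg_right h2 hx
  have hq_cont : Continuous q :=
    continuous_finset_sum _ fun i _ => continuous_const.mul (continuous_pow i)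
  have hq0 : q 0 = (-1:ℝ)^(n+1) * c 1 t := by
    rw [hq]
    simp only []
    rw [Finset.sum_range_succ' (fun i => ((-1:ℝ)^(n+1) * c (i+1) t) * (0:ℝ)^i) n]
    simp
  have hle : 0 ≤ q 0 := by
    have htend : Tendsto q (𝓝[>] (0:ℝ)) (𝓝 (q 0)) :=
      (hq_cont.tendsto 0).mono_left nhdsWithin_le_nhds
    refine ge_of_tendsto htend ?_
    filter_upwards [self_mem_nhdsWithin] with x hx
    exact hq_nonneg x hx
  rw [hq0, hc1 (by omega) t ht] at hle
  rw [← iteratedDeriv_succ']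
  have : (-1:ℝ)^(n+1) * (-iteratedDeriv (n+1) f t) = (-1:ℝ)^n * iteratedDeriv (n+1) f t := by
    rw [pow_succ]; ring
  linarith [hle, this.symm.le]

/-- A function is a Bernstein function iff it is nonnegative and all
exponentials exp(-x f) are completely monotonic. -/
theorem bernstein_iff_exp_completelyMonotonic (f : ℝ → ℝ) :
    (ContDiffOn ℝ (⊤ : ℕ∞) f (Set.Ioi 0) ∧ (∀ x > (0:ℝ), 0 ≤ f x) ∧
        CompletelyMonotonic (deriv f)) ↔
      ((∀ x > (0:ℝ), 0 ≤ f x) ∧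
        ∀ x > (0:ℝ), CompletelyMonotonic (fun t => Real.exp (-(x * f t)))) := by
  constructor
  · rintro ⟨hf, hpos, hcm⟩
    exact ⟨hpos, fun x hx => forward hf hcm hx⟩
  · rintro ⟨hpos, hcm⟩
    have h1 : ContDiffOn ℝ (⊤ : ℕ∞) (fun t => Real.exp (-(1 * f t))) (Set.Ioi 0) :=
      (hcm 1 one_pos).1
    have hf : ContDiffOn ℝ (⊤ : ℕ∞) f (Set.Ioi 0) := by
      have h2 : ContDiffOn ℝ (⊤ : ℕ∞) (fun t => -Real.log (Real.exp (-(1 * f t)))) (Set.Ioi 0) :=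
        (h1.log fun t _ => (Real.exp_pos _).ne').neg
      exact h2.congr fun t _ => by simp [Real.log_exp]
    refine ⟨hf, hpos, hf.deriv_of_isOpen isOpen_Ioi (by simp), fun n t ht => ?_⟩
    exact backward_sign hf hcm n ht
end

section
/- If g₁ is a generalized Bernstein function of order λ₁ > 0 and g₂ is a generalized Bernstein function of order λ₂ > 0, then the product g₁ g₂ is a generalized Bernstein function of order λ₁ + λ₂. -/
open MeasureTheory Set

open Topology

/-- Generalized Bernstein function of order lam. -/
def GenBernstein (lam : ℝ) (g : ℝ → ℝ) : Prop :=
  ContDiffOn ℝ (⊤ : ℕ∞) g (Set.Ioi 0) ∧ (∀ x > (0:ℝ), 0 ≤ g x) ∧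
    CompletelyMonotonic (fun x => x ^ (1 - lam) * deriv g x)

lemma iterWithin_eq {f : ℝ → ℝ} (n : ℕ) {x : ℝ} (hx : x ∈ Ioi (0:ℝ)) :
    iteratedDerivWithin n f (Ioi 0) x = iteratedDeriv n f x := by
  simp only [iteratedDerivWithin, iteratedDeriv,
    iteratedFDerivWithin_of_isOpen n isOpen_Ioi hx]

lemma iter_add {f g : ℝ → ℝ} (hf : ContDiffOn ℝ (⊤ : ℕ∞) f (Ioi 0)) (hg : ContDiffOn ℝ (⊤ : ℕ∞) g (Ioi 0))
    (n : ℕ) {x : ℝ} (hx : 0 < x) :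
    iteratedDeriv n (fun y => f y + g y) x = iteratedDeriv n f x + iteratedDeriv n g x := by
  have hx' : x ∈ Ioi (0:ℝ) := hx
  rw [← iterWithin_eq n hx', ← iterWithin_eq n hx', ← iterWithin_eq n hx']
  exact iteratedDerivWithin_add hx' isOpen_Ioi.uniqueDiffOn (hf.of_le (by exact_mod_cast le_top) x hx') (hg.of_le (by exact_mod_cast le_top) x hx')

lemma cm_add {f g : ℝ → ℝ} (hf : CompletelyMonotonic f) (hg : CompletelyMonotonic g) :
    CompletelyMonotonic (fun x => f x + g x) := by
  refine ⟨hf.1.add hg.1, fun n x hx => ?_⟩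
  rw [iter_add hf.1 hg.1 n hx, mul_add]
  exact add_nonneg (hf.2 n x hx) (hg.2 n x hx)

lemma cm_neg_deriv {f : ℝ → ℝ} (hf : CompletelyMonotonic f) :
    CompletelyMonotonic (fun x => -(deriv f x)) := by
  refine ⟨(hf.1.deriv_of_isOpen isOpen_Ioi (by simp)).neg, fun n x hx => ?_⟩
  have h1 : iteratedDeriv n (fun y => -(deriv f y)) x = -(iteratedDeriv n (deriv f) x) :=
    iteratedDeriv_neg n (deriv f) x
  have h2 : iteratedDeriv n (deriv f) x = iteratedDeriv (n+1) f x := by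
    rw [iteratedDeriv_succ']
  have := hf.2 (n+1) x hx
  rw [h1, h2]
  calc (0:ℝ) ≤ (-1)^(n+1) * iteratedDeriv (n+1) f x := this
  _ = (-1)^n * -iteratedDeriv (n+1) f x := by ring

lemma cm_mul_sign : ∀ (n : ℕ) (f g : ℝ → ℝ), CompletelyMonotonic f → CompletelyMonotonic g →
    ∀ x > (0:ℝ), 0 ≤ (-1:ℝ)^n * iteratedDeriv n (fun y => f y * g y) x := by
  intro n
  induction n with
  | zero => intro f g hf hg x hx; simpa using mul_nonneg (hf.2 0 x (by simpa using hx) |>.trans_eq (by simp) |> fun h => h) (by simpa using hg.2 0 x hx)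
  | succ n ih =>
    intro f g hf hg x hx
    have hdf : ContDiffOn ℝ (⊤ : ℕ∞) (fun y => -(deriv f y)) (Ioi 0) :=
      (hf.1.deriv_of_isOpen isOpen_Ioi (by simp)).neg
    have hdg : ContDiffOn ℝ (⊤ : ℕ∞) (fun y => -(deriv g y)) (Ioi 0) :=
      (hg.1.deriv_of_isOpen isOpen_Ioi (by simp)).neg
    -- deriv (f*g) = f' g + f g' on Ioi 0
    have heq : Set.EqOn (deriv (fun y => f y * g y))
        (fun y => (-(-(deriv f y) * g y)) + (-(f y * -(deriv g y)))) (Ioi 0) := by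
      intro y hy
      have dfy : DifferentiableAt ℝ f y :=
        (hf.1.contDiffAt (isOpen_Ioi.mem_nhds hy)).differentiableAt (by simp)
      have dgy : DifferentiableAt ℝ g y :=
        (hg.1.contDiffAt (isOpen_Ioi.mem_nhds hy)).differentiableAt (by simp)
      rw [deriv_fun_mul dfy dgy]; ring
    rw [iteratedDeriv_succ', (heq.iteratedDeriv_of_isOpen isOpen_Ioi n) hx,
      iter_add ((hdf.mul hg.1).neg) ((hf.1.mul hdg).neg) n hx, mul_add]
    have t1 : (0:ℝ) ≤ (-1)^(n+1) * iteratedDeriv n (fun y => -(-(deriv f y) * g y)) x := by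
      have := ih (fun y => -(deriv f y)) g (cm_neg_deriv hf) hg x hx
      rw [show iteratedDeriv n (fun y => -(-(deriv f y) * g y)) x = -iteratedDeriv n (fun y => -(deriv f y) * g y) x from iteratedDeriv_neg n _ x]
      calc (0:ℝ) ≤ (-1)^n * iteratedDeriv n (fun y => -(deriv f y) * g y) x := this
      _ = (-1)^(n+1) * -iteratedDeriv n (fun y => -(deriv f y) * g y) x := by ring
    have t2 : (0:ℝ) ≤ (-1)^(n+1) * iteratedDeriv n (fun y => -(f y * -(deriv g y))) x := by
      have := ih f (fun y => -(deriv g y)) hf (cm_neg_deriv hg) x hx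
      rw [show iteratedDeriv n (fun y => -(f y * -(deriv g y))) x = -iteratedDeriv n (fun y => f y * -(deriv g y)) x from iteratedDeriv_neg n _ x]
      calc (0:ℝ) ≤ (-1)^n * iteratedDeriv n (fun y => f y * -(deriv g y)) x := this
      _ = (-1)^(n+1) * -iteratedDeriv n (fun y => f y * -(deriv g y)) x := by ring
    exact add_nonneg t1 t2

lemma cm_mul {f g : ℝ → ℝ} (hf : CompletelyMonotonic f) (hg : CompletelyMonotonic g) :
    CompletelyMonotonic (fun x => f x * g x) :=
  ⟨hf.1.mul hg.1, fun n x hx => cm_mul_sign n f g hf hg x hx⟩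


lemma rpow_smooth (c : ℝ) : ContDiffOn ℝ (⊤ : ℕ∞) (fun x : ℝ => x ^ c) (Ioi 0) :=
  fun x hx => (Real.contDiffAt_rpow_const_of_ne (ne_of_gt hx)).contDiffWithinAt

lemma iter_smooth {f : ℝ → ℝ} (hf : ContDiffOn ℝ (⊤ : ℕ∞) f (Ioi 0)) (n : ℕ) :
    ContDiffOn ℝ (⊤ : ℕ∞) (iteratedDeriv n f) (Ioi 0) := by
  induction n with
  | zero => simpa using hf
  | succ n ih => rw [iteratedDeriv_succ]; exact ih.deriv_of_isOpen isOpen_Ioi (by simp)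

lemma iter_diff {f : ℝ → ℝ} (hf : ContDiffOn ℝ (⊤ : ℕ∞) f (Ioi 0)) (n : ℕ) {x : ℝ} (hx : 0 < x) :
    DifferentiableAt ℝ (iteratedDeriv n f) x :=
  ((iter_smooth hf n).contDiffAt (isOpen_Ioi.mem_nhds hx)).differentiableAt (by simp)

lemma ode_lemma {lam : ℝ} {g : ℝ → ℝ} (hg : ContDiffOn ℝ (⊤ : ℕ∞) g (Ioi 0)) (n : ℕ) :
    ∀ x > (0:ℝ), x * iteratedDeriv (n+1) (fun y => y ^ (-lam) * g y) x
      + ((n:ℝ) + lam) * iteratedDeriv n (fun y => y ^ (-lam) * g y) x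
      = iteratedDeriv n (fun y => y ^ (1-lam) * deriv g y) x := by
  have hh : ContDiffOn ℝ (⊤ : ℕ∞) (fun y : ℝ => y ^ (-lam) * g y) (Ioi 0) :=
    (rpow_smooth (-lam)).mul hg
  induction n with
  | zero =>
    intro x hx
    have dg : DifferentiableAt ℝ g x :=
      (hg.contDiffAt (isOpen_Ioi.mem_nhds hx)).differentiableAt (by simp)
    have dh : HasDerivAt (fun y : ℝ => y ^ (-lam) * g y)
        ((-lam) * x ^ (-lam - 1) * g x + x ^ (-lam) * deriv g x) x :=
      (Real.hasDerivAt_rpow_const (Or.inl (ne_of_gt hx))).mul dg.hasDerivAt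
    have e1 : x ^ ((1:ℝ) + (-lam - 1)) = x * x ^ (-lam - 1) := by
      rw [Real.rpow_add hx, Real.rpow_one]
    rw [show (1:ℝ) + (-lam - 1) = -lam by ring] at e1
    have e2 : x ^ ((1:ℝ) + -lam) = x * x ^ (-lam) := by
      rw [Real.rpow_add hx, Real.rpow_one]
    rw [show (1:ℝ) + -lam = 1 - lam by ring] at e2
    simp only [iteratedDeriv_one, iteratedDeriv_zero, Nat.cast_zero, zero_add]
    rw [dh.deriv]
    linear_combination (lam * g x) * e1 - (deriv g x) * e2
  | succ n ih =>
    intro x hx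
    have hF : HasDerivAt (fun y => y * iteratedDeriv (n+1) (fun y => y ^ (-lam) * g y) y
        + ((n:ℝ) + lam) * iteratedDeriv n (fun y => y ^ (-lam) * g y) y)
        ((1 * iteratedDeriv (n+1) (fun y => y ^ (-lam) * g y) x
          + x * iteratedDeriv (n+2) (fun y => y ^ (-lam) * g y) x)
         + ((n:ℝ) + lam) * iteratedDeriv (n+1) (fun y => y ^ (-lam) * g y) x) x := by
      have d1 : HasDerivAt (fun y => y * iteratedDeriv (n+1) (fun y => y ^ (-lam) * g y) y)
          (1 * iteratedDeriv (n+1) (fun y => y ^ (-lam) * g y) x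
            + x * iteratedDeriv (n+2) (fun y => y ^ (-lam) * g y) x) x := by
        have := (hasDerivAt_id x).mul (iter_diff hh (n+1) hx).hasDerivAt
        rwa [← iteratedDeriv_succ] at this
      have d2 : HasDerivAt (fun y => ((n:ℝ) + lam) * iteratedDeriv n (fun y => y ^ (-lam) * g y) y)
          (((n:ℝ) + lam) * iteratedDeriv (n+1) (fun y => y ^ (-lam) * g y) x) x := by
        have := ((iter_diff hh n hx).hasDerivAt).const_mul ((n:ℝ) + lam)
        rwa [← iteratedDeriv_succ] at this
      exact d1.add d2
    have hFeq : HasDerivAt (iteratedDeriv n (fun y => y ^ (1-lam) * deriv g y))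
        ((1 * iteratedDeriv (n+1) (fun y => y ^ (-lam) * g y) x
          + x * iteratedDeriv (n+2) (fun y => y ^ (-lam) * g y) x)
         + ((n:ℝ) + lam) * iteratedDeriv (n+1) (fun y => y ^ (-lam) * g y) x) x := by
      refine hF.congr_of_eventuallyEq ?_
      filter_upwards [isOpen_Ioi.mem_nhds hx] with y hy
      exact (ih y hy).symm
    have := hFeq.deriv
    rw [← iteratedDeriv_succ] at this
    push_cast
    linarith [this]

lemma psi_hasDeriv {lam : ℝ} {g : ℝ → ℝ} (hg : ContDiffOn ℝ (⊤ : ℕ∞) g (Ioi 0)) (n : ℕ) {x : ℝ}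
    (hx : 0 < x) :
    HasDerivAt (fun y => y ^ ((n:ℝ) + lam) * ((-1:ℝ)^n * iteratedDeriv n (fun z => z ^ (-lam) * g z) y))
      (x ^ ((n:ℝ) + lam - 1) * ((-1:ℝ)^n * iteratedDeriv n (fun z => z ^ (1-lam) * deriv g z) x)) x := by
  have hh : ContDiffOn ℝ (⊤ : ℕ∞) (fun y : ℝ => y ^ (-lam) * g y) (Ioi 0) :=
    (rpow_smooth (-lam)).mul hg
  have d := (Real.hasDerivAt_rpow_const (p := (n:ℝ)+lam) (Or.inl (ne_of_gt hx))).fun_mul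
    (((iter_diff hh n hx).hasDerivAt).const_mul ((-1:ℝ)^n))
  rw [← iteratedDeriv_succ] at d
  have e : x ^ (((n:ℝ) + lam - 1) + 1) = x ^ ((n:ℝ) + lam - 1) * x := by
    rw [Real.rpow_add hx, Real.rpow_one]
  rw [show ((n:ℝ) + lam - 1) + 1 = (n:ℝ) + lam by ring] at e
  refine d.congr_deriv (Eq.symm ?_)
  linear_combination (-(x ^ ((n:ℝ)+lam-1) * (-1:ℝ)^n)) * (ode_lemma hg n x hx)
    - ((-1:ℝ)^n * iteratedDeriv (n+1) (fun z => z ^ (-lam) * g z) x) * e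

lemma psi_mono {lam : ℝ} {g : ℝ → ℝ} (hg : ContDiffOn ℝ (⊤ : ℕ∞) g (Ioi 0))
    (hφ : CompletelyMonotonic (fun x => x ^ (1 - lam) * deriv g x)) (n : ℕ) :
    MonotoneOn (fun y => y ^ ((n:ℝ) + lam) * ((-1:ℝ)^n * iteratedDeriv n (fun z => z ^ (-lam) * g z) y)) (Ioi 0) := by
  refine monotoneOn_of_deriv_nonneg (convex_Ioi 0)
    (fun x hx => (psi_hasDeriv hg n hx).continuousAt.continuousWithinAt) ?_ ?_
  · rw [interior_Ioi]
    exact fun x hx => (psi_hasDeriv hg n hx).differentiableAt.differentiableWithinAt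
  · rw [interior_Ioi]
    intro x hx
    rw [(psi_hasDeriv hg n hx).deriv]
    exact mul_nonneg (Real.rpow_nonneg (le_of_lt hx) _) (hφ.2 n x hx)

lemma cm_iter_anti {f : ℝ → ℝ} (hf : CompletelyMonotonic f) (n : ℕ) :
    AntitoneOn (fun y => (-1:ℝ)^n * iteratedDeriv n f y) (Ioi 0) := by
  refine antitoneOn_of_deriv_nonpos (convex_Ioi 0)
    (fun x hx => (((iter_diff hf.1 n hx).hasDerivAt).const_mul
      ((-1:ℝ)^n)).continuousAt.continuousWithinAt) ?_ ?_
  · rw [interior_Ioi]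
    exact fun x hx => (((iter_diff hf.1 n hx).hasDerivAt).const_mul
      ((-1:ℝ)^n)).differentiableAt.differentiableWithinAt
  · rw [interior_Ioi]
    intro x hx
    rw [(((iter_diff hf.1 n hx).hasDerivAt).const_mul ((-1:ℝ)^n)).deriv, ← iteratedDeriv_succ]
    have := hf.2 (n+1) x hx
    rw [pow_succ] at this
    linarith

lemma E_step {f : ℝ → ℝ} (hf : CompletelyMonotonic f) (n : ℕ) {x : ℝ} (hx : 0 < x) :
    x * ((-1:ℝ)^(n+1) * iteratedDeriv (n+1) f x) ≤ 2 * ((-1:ℝ)^n * iteratedDeriv n f (x/2)) := by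
  set c : ℝ := (-1:ℝ)^(n+1) * iteratedDeriv (n+1) f x with hc
  have hder : ∀ t ∈ Ioi (0:ℝ), HasDerivAt (fun t => (-1:ℝ)^n * iteratedDeriv n f t + c * t)
      ((-1:ℝ)^n * iteratedDeriv (n+1) f t + c * 1) t := by
    intro t ht
    have h1 := ((iter_diff hf.1 n ht).hasDerivAt).const_mul ((-1:ℝ)^n)
    rw [← iteratedDeriv_succ] at h1
    exact h1.add ((hasDerivAt_id t).const_mul c)
  have hsub : Icc (x/2) x ⊆ Ioi (0:ℝ) := fun t ht => lt_of_lt_of_le (by linarith) ht.1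
  have hanti : AntitoneOn (fun t => (-1:ℝ)^n * iteratedDeriv n f t + c * t) (Icc (x/2) x) := by
    refine antitoneOn_of_deriv_nonpos (convex_Icc _ _)
      (fun t ht => (hder t (hsub ht)).continuousAt.continuousWithinAt) ?_ ?_
    · rw [interior_Icc]
      exact fun t ht => (hder t (hsub (Ioo_subset_Icc_self ht))).differentiableAt.differentiableWithinAt
    · rw [interior_Icc]
      intro t ht
      have ht' : t ∈ Ioi (0:ℝ) := hsub (Ioo_subset_Icc_self ht)
      rw [(hder t ht').deriv]
      have key := cm_iter_anti hf (n+1) ht' (show x ∈ Ioi (0:ℝ) from hx) (le_of_lt ht.2)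
      have : (-1:ℝ)^n * iteratedDeriv (n+1) f t = -((-1:ℝ)^(n+1) * iteratedDeriv (n+1) f t) := by
        rw [pow_succ]; ring
      rw [this]
      simp only at key
      linarith
  have hv := hanti (show x/2 ∈ Icc (x/2) x from ⟨le_refl _, by linarith⟩)
    (show x ∈ Icc (x/2) x from ⟨by linarith, le_refl _⟩) (by linarith)
  have hpos := hf.2 n x hx
  simp only at hv
  linarith

lemma E_zero {lam : ℝ} (hlam : 0 < lam) {g : ℝ → ℝ} (hg : ContDiffOn ℝ (⊤ : ℕ∞) g (Ioi 0))
    (hφ : CompletelyMonotonic (fun x => x ^ (1 - lam) * deriv g x)) {x : ℝ} (hx : 0 < x) :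
    (1 - (2:ℝ) ^ (-lam)) / lam * (x ^ lam * (x ^ (1 - lam) * deriv g x)) ≤ g x - g (x/2) := by
  set φ : ℝ → ℝ := fun x => x ^ (1 - lam) * deriv g x with hφdef
  have hsub : Icc (x/2) x ⊆ Ioi (0:ℝ) := fun t ht => lt_of_lt_of_le (by linarith) ht.1
  have hder : ∀ t ∈ Ioi (0:ℝ), HasDerivAt (fun t => g t - φ x / lam * t ^ lam)
      (deriv g t - φ x / lam * (lam * t ^ (lam - 1))) t := by
    intro t ht
    have dg : DifferentiableAt ℝ g t :=
      (hg.contDiffAt (isOpen_Ioi.mem_nhds ht)).differentiableAt (by simp)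
    exact dg.hasDerivAt.sub ((Real.hasDerivAt_rpow_const (Or.inl (ne_of_gt ht))).const_mul (φ x / lam))
  have hmono : MonotoneOn (fun t => g t - φ x / lam * t ^ lam) (Icc (x/2) x) := by
    refine monotoneOn_of_deriv_nonneg (convex_Icc _ _)
      (fun t ht => (hder t (hsub ht)).continuousAt.continuousWithinAt) ?_ ?_
    · rw [interior_Icc]
      exact fun t ht => (hder t (hsub (Ioo_subset_Icc_self ht))).differentiableAt.differentiableWithinAt
    · rw [interior_Icc]
      intro t ht
      have ht' : (0:ℝ) < t := hsub (Ioo_subset_Icc_self ht)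
      rw [(hder t (by exact ht')).deriv]
      have hid : t ^ (lam - 1) * t ^ (1 - lam) = 1 := by
        rw [← Real.rpow_add ht', show lam - 1 + (1 - lam) = 0 by ring, Real.rpow_zero]
      have hdg : deriv g t = t ^ (lam - 1) * φ t := by
        simp only [hφdef]
        rw [← mul_assoc, hid, one_mul]
      have hanti := cm_iter_anti hφ 0
      simp only [pow_zero, one_mul, iteratedDeriv_zero] at hanti
      have hφtx : φ x ≤ φ t := hanti (show t ∈ Ioi (0:ℝ) from ht') (show x ∈ Ioi (0:ℝ) from hx)
        (le_of_lt ht.2)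
      have htp : (0:ℝ) ≤ t ^ (lam - 1) := Real.rpow_nonneg (le_of_lt ht') _
      have : φ x / lam * (lam * t ^ (lam - 1)) = t ^ (lam - 1) * φ x := by
        field_simp
      rw [this, hdg]
      nlinarith
  have hw := hmono (show x/2 ∈ Icc (x/2) x from ⟨le_refl _, by linarith⟩)
    (show x ∈ Icc (x/2) x from ⟨by linarith, le_refl _⟩) (by linarith)
  simp only at hw
  have ehalf : (x/2) ^ lam = x ^ lam * (2:ℝ) ^ (-lam) := by
    rw [div_eq_mul_inv, Real.mul_rpow (le_of_lt hx) (by norm_num),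
      Real.inv_rpow (by norm_num), ← Real.rpow_neg (by norm_num)]
  rw [ehalf] at hw
  have eq1 : (1 - (2:ℝ) ^ (-lam)) / lam * (x ^ lam * φ x)
      = φ x / lam * x ^ lam - φ x / lam * (x ^ lam * (2:ℝ) ^ (-lam)) := by ring
  simp only [hφdef] at eq1 ⊢
  linarith [eq1, hw]

lemma g_mono {lam : ℝ} {g : ℝ → ℝ} (hg : ContDiffOn ℝ (⊤ : ℕ∞) g (Ioi 0))
    (hφ : CompletelyMonotonic (fun x => x ^ (1 - lam) * deriv g x)) :
    MonotoneOn g (Ioi 0) := by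
  refine monotoneOn_of_deriv_nonneg (convex_Ioi 0) hg.continuousOn ?_ ?_
  · rw [interior_Ioi]
    exact fun x hx => ((hg.contDiffAt (isOpen_Ioi.mem_nhds hx)).differentiableAt
      (by simp)).differentiableWithinAt
  · rw [interior_Ioi]
    intro x hx
    have h0 := hφ.2 0 x hx
    simp only [pow_zero, one_mul, iteratedDeriv_zero] at h0
    exact (mul_nonneg_iff_of_pos_left (Real.rpow_pos_of_pos hx _)).mp h0

lemma D_lemma {lam : ℝ} (hlam : 0 < lam) {g : ℝ → ℝ} (hg : ContDiffOn ℝ (⊤ : ℕ∞) g (Ioi 0))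
    (hg0 : ∀ x > (0:ℝ), 0 ≤ g x)
    (hφ : CompletelyMonotonic (fun x => x ^ (1 - lam) * deriv g x)) (n : ℕ) :
    ∀ δ > (0:ℝ), ∀ x > (0:ℝ), ∃ ε, 0 < ε ∧ ε < x ∧
      ε ^ ((n:ℝ) + lam) * ((-1:ℝ)^n * iteratedDeriv n (fun y => y ^ (1-lam) * deriv g y) ε) ≤ δ := by
  induction n with
  | zero =>
    intro δ hδ x hx
    have h21 : (2:ℝ) ^ (-lam) < 1 :=
      Real.rpow_lt_one_of_one_lt_of_neg one_lt_two (neg_lt_zero.mpr hlam)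
    have hC : (0:ℝ) < (1 - (2:ℝ) ^ (-lam)) / lam := div_pos (by linarith) hlam
    have hbdd : BddBelow (g '' Ioi 0) := ⟨0, by rintro z ⟨y, hy, rfl⟩; exact hg0 y hy⟩
    have hne : (g '' Ioi 0).Nonempty := ⟨g 1, 1, by norm_num, rfl⟩
    set L := sInf (g '' Ioi 0) with hL
    obtain ⟨z, hzmem, hz⟩ := exists_lt_of_csInf_lt hne
      (lt_add_of_pos_right L (mul_pos hC hδ))
    obtain ⟨y, hy, rfl⟩ := hzmem
    set ε := min y (x/2) with hε
    have hεpos : 0 < ε := lt_min hy (half_pos hx)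
    have hεx : ε < x := lt_of_le_of_lt (min_le_right _ _) (half_lt_self hx)
    refine ⟨ε, hεpos, hεx, ?_⟩
    have hgy : g ε ≤ g y := g_mono hg hφ (show ε ∈ Ioi (0:ℝ) from hεpos) hy (min_le_left _ _)
    have hgl : L ≤ g (ε/2) := csInf_le hbdd ⟨ε/2, half_pos hεpos, rfl⟩
    have hE0 := E_zero hlam hg hφ hεpos
    simp only [Nat.cast_zero, zero_add, pow_zero, one_mul, iteratedDeriv_zero]
    have key : (1 - (2:ℝ) ^ (-lam)) / lam * (ε ^ lam * (ε ^ (1-lam) * deriv g ε))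
        ≤ (1 - (2:ℝ) ^ (-lam)) / lam * δ := by
      calc (1 - (2:ℝ) ^ (-lam)) / lam * (ε ^ lam * (ε ^ (1-lam) * deriv g ε))
          ≤ g ε - g (ε/2) := hE0
        _ ≤ (1 - (2:ℝ) ^ (-lam)) / lam * δ := by linarith
    exact le_of_mul_le_mul_left key hC
  | succ n ih =>
    intro δ hδ x hx
    have h2p : (0:ℝ) < (2:ℝ) ^ ((n:ℝ) + lam + 1) := Real.rpow_pos_of_pos two_pos _
    obtain ⟨ε', hε'pos, hε'lt, hbound⟩ :=
      ih (δ / (2:ℝ) ^ ((n:ℝ) + lam + 1)) (div_pos hδ h2p) (x/2) (half_pos hx)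
    refine ⟨2 * ε', by linarith, by linarith, ?_⟩
    have hεpos : (0:ℝ) < 2 * ε' := by linarith
    have e1 : (2 * ε') ^ ((↑(n+1):ℝ) + lam) = (2 * ε') ^ ((n:ℝ) + lam) * (2 * ε') := by
      push_cast
      rw [show (n:ℝ) + 1 + lam = ((n:ℝ) + lam) + 1 by ring, Real.rpow_add hεpos, Real.rpow_one]
    have e2 : (2 * ε') ^ ((n:ℝ) + lam) = 2 ^ ((n:ℝ) + lam) * ε' ^ ((n:ℝ) + lam) :=
      Real.mul_rpow (by norm_num) (le_of_lt hε'pos)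
    have hE := E_step ⟨hφ.1, hφ.2⟩ n hεpos
    rw [show (2 * ε') / 2 = ε' by ring] at hE
    have hΦ' : 0 ≤ (-1:ℝ)^n * iteratedDeriv n (fun y => y ^ (1-lam) * deriv g y) ε' :=
      hφ.2 n ε' hε'pos
    have hrp : (0:ℝ) ≤ (2 * ε') ^ ((n:ℝ) + lam) := Real.rpow_nonneg (le_of_lt hεpos) _
    have e3 : (2:ℝ) ^ ((n:ℝ) + lam + 1) = 2 ^ ((n:ℝ) + lam) * 2 := by
      rw [Real.rpow_add two_pos, Real.rpow_one]
    calc (2 * ε') ^ ((↑(n+1):ℝ) + lam)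
          * ((-1:ℝ)^(n+1) * iteratedDeriv (n+1) (fun y => y ^ (1-lam) * deriv g y) (2 * ε'))
        = (2 * ε') ^ ((n:ℝ) + lam)
          * ((2 * ε') * ((-1:ℝ)^(n+1) * iteratedDeriv (n+1) (fun y => y ^ (1-lam) * deriv g y) (2 * ε'))) := by
          rw [e1]; ring
      _ ≤ (2 * ε') ^ ((n:ℝ) + lam)
          * (2 * ((-1:ℝ)^n * iteratedDeriv n (fun y => y ^ (1-lam) * deriv g y) ε')) :=
          mul_le_mul_of_nonneg_left hE hrp
      _ = (2:ℝ) ^ ((n:ℝ) + lam + 1)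
          * (ε' ^ ((n:ℝ) + lam) * ((-1:ℝ)^n * iteratedDeriv n (fun y => y ^ (1-lam) * deriv g y) ε')) := by
          rw [e2, e3]; ring
      _ ≤ (2:ℝ) ^ ((n:ℝ) + lam + 1) * (δ / (2:ℝ) ^ ((n:ℝ) + lam + 1)) :=
          mul_le_mul_of_nonneg_left hbound (le_of_lt h2p)
      _ = δ := mul_div_cancel₀ δ (ne_of_gt h2p)

lemma psi_nonneg {lam : ℝ} (hlam : 0 < lam) {g : ℝ → ℝ} (hg : ContDiffOn ℝ (⊤ : ℕ∞) g (Ioi 0))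
    (hg0 : ∀ x > (0:ℝ), 0 ≤ g x)
    (hφ : CompletelyMonotonic (fun x => x ^ (1 - lam) * deriv g x)) (n : ℕ) :
    ∀ x > (0:ℝ), 0 ≤ x ^ ((n:ℝ) + lam) * ((-1:ℝ)^n * iteratedDeriv n (fun z => z ^ (-lam) * g z) x) := by
  induction n with
  | zero =>
    intro x hx
    simp only [Nat.cast_zero, zero_add, pow_zero, one_mul, iteratedDeriv_zero]
    have e : x ^ lam * x ^ (-lam) = 1 := by
      rw [← Real.rpow_add hx, show lam + -lam = 0 by ring, Real.rpow_zero]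
    calc (0:ℝ) ≤ g x := hg0 x hx
      _ = x ^ lam * (x ^ (-lam) * g x) := by rw [← mul_assoc, e, one_mul]
  | succ n ih =>
    intro x hx
    by_contra hneg
    push_neg at hneg
    set δ := -(x ^ ((↑(n+1):ℝ) + lam)
      * ((-1:ℝ)^(n+1) * iteratedDeriv (n+1) (fun z => z ^ (-lam) * g z) x)) / 2 with hδ
    have hδpos : 0 < δ := by rw [hδ]; linarith
    obtain ⟨ε, hεpos, hεx, hbound⟩ := D_lemma hlam hg hg0 hφ n δ hδpos x hx
    have hmono := psi_mono hg hφ (n+1) (show ε ∈ Ioi (0:ℝ) from hεpos)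
      (show x ∈ Ioi (0:ℝ) from hx) (le_of_lt hεx)
    simp only at hmono
    have e : ε ^ ((↑(n+1):ℝ) + lam) = ε ^ ((n:ℝ) + lam) * ε := by
      push_cast
      rw [show (n:ℝ) + 1 + lam = ((n:ℝ) + lam) + 1 by ring, Real.rpow_add hεpos, Real.rpow_one]
    have hid : ε ^ ((↑(n+1):ℝ) + lam)
        * ((-1:ℝ)^(n+1) * iteratedDeriv (n+1) (fun z => z ^ (-lam) * g z) ε)
        = ((n:ℝ) + lam) * (ε ^ ((n:ℝ) + lam) * ((-1:ℝ)^n * iteratedDeriv n (fun z => z ^ (-lam) * g z) ε))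
          - ε ^ ((n:ℝ) + lam) * ((-1:ℝ)^n * iteratedDeriv n (fun y => y ^ (1-lam) * deriv g y) ε) := by
      linear_combination ((-1:ℝ)^(n+1) * iteratedDeriv (n+1) (fun z => z ^ (-lam) * g z) ε) * e
        - (ε ^ ((n:ℝ) + lam) * (-1:ℝ)^n) * (ode_lemma hg n ε hεpos)
    have hIH := ih ε hεpos
    have hnl : (0:ℝ) ≤ (n:ℝ) + lam := by positivity
    nlinarith [hmono, hid, hbound, mul_nonneg hnl hIH]

lemma cm_aux {lam : ℝ} (hlam : 0 < lam) {g : ℝ → ℝ} (hg : ContDiffOn ℝ (⊤ : ℕ∞) g (Ioi 0))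
    (hg0 : ∀ x > (0:ℝ), 0 ≤ g x)
    (hφ : CompletelyMonotonic (fun x => x ^ (1 - lam) * deriv g x)) :
    CompletelyMonotonic (fun x => x ^ (-lam) * g x) := by
  refine ⟨(rpow_smooth (-lam)).mul hg, fun n x hx => ?_⟩
  have := psi_nonneg hlam hg hg0 hφ n x hx
  exact (mul_nonneg_iff_of_pos_left (Real.rpow_pos_of_pos hx _)).mp this

lemma cm_congr {f g : ℝ → ℝ} (hfg : ∀ x > (0:ℝ), f x = g x)
    (hf : CompletelyMonotonic f) : CompletelyMonotonic g := by
  constructor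
  · exact hf.1.congr fun x hx => (hfg x hx).symm
  · intro n x hx
    rw [← (Set.EqOn.iteratedDeriv_of_isOpen (fun y hy => hfg y hy) isOpen_Ioi n) hx]
    exact hf.2 n x hx

theorem genBernstein_mul (lam₁ lam₂ : ℝ) (hlam₁ : 0 < lam₁) (hlam₂ : 0 < lam₂)
    (g₁ g₂ : ℝ → ℝ) (h₁ : GenBernstein lam₁ g₁) (h₂ : GenBernstein lam₂ g₂) :
    GenBernstein (lam₁ + lam₂) (fun x => g₁ x * g₂ x) := by
  obtain ⟨hg1, hg10, hφ1⟩ := h₁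
  obtain ⟨hg2, hg20, hφ2⟩ := h₂
  have hh1 := cm_aux hlam₁ hg1 hg10 hφ1
  have hh2 := cm_aux hlam₂ hg2 hg20 hφ2
  refine ⟨hg1.mul hg2, fun x hx => mul_nonneg (hg10 x hx) (hg20 x hx), ?_⟩
  refine cm_congr (f := fun x => (x ^ (1-lam₁) * deriv g₁ x) * (x ^ (-lam₂) * g₂ x)
      + (x ^ (-lam₁) * g₁ x) * (x ^ (1-lam₂) * deriv g₂ x)) ?_
    (cm_add (cm_mul hφ1 hh2) (cm_mul hh1 hφ2))
  intro x hx
  have d1 : DifferentiableAt ℝ g₁ x :=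
    (hg1.contDiffAt (isOpen_Ioi.mem_nhds hx)).differentiableAt (by simp)
  have d2 : DifferentiableAt ℝ g₂ x :=
    (hg2.contDiffAt (isOpen_Ioi.mem_nhds hx)).differentiableAt (by simp)
  rw [deriv_fun_mul d1 d2]
  have p1 : x ^ (1-lam₁) * x ^ (-lam₂) = x ^ (1 - (lam₁ + lam₂)) := by
    rw [← Real.rpow_add hx, show (1-lam₁) + -lam₂ = 1 - (lam₁+lam₂) by ring]
  have p2 : x ^ (-lam₁) * x ^ (1-lam₂) = x ^ (1 - (lam₁ + lam₂)) := by
    rw [← Real.rpow_add hx, show -lam₁ + (1-lam₂) = 1 - (lam₁+lam₂) by ring]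
  linear_combination (deriv g₁ x * g₂ x) * p1 + (g₁ x * deriv g₂ x) * p2
end

section
/- If g is a generalized Bernstein function of order λ > 0, then x ↦ g(x)/x^λ is completely monotonic on (0,∞). -/
open MeasureTheory Set

/-- A smooth function on `Ioi 0` has differentiable iterated derivatives there. -/
lemma GB_diffAt_iter {f : ℝ → ℝ} (hf : ContDiffOn ℝ (⊤ : ℕ∞) f (Set.Ioi 0)) (n : ℕ) {x : ℝ}
    (hx : 0 < x) : DifferentiableAt ℝ (iteratedDeriv n f) x := by
  have ho : IsOpen (Set.Ioi (0:ℝ)) := isOpen_Ioi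
  have hu : UniqueDiffOn ℝ (Set.Ioi (0:ℝ)) := ho.uniqueDiffOn
  have hd : DifferentiableOn ℝ (iteratedDerivWithin n f (Set.Ioi 0)) (Set.Ioi 0) :=
    hf.differentiableOn_iteratedDerivWithin (by exact_mod_cast WithTop.coe_lt_top _) hu
  have heq : Set.EqOn (iteratedDerivWithin n f (Set.Ioi 0)) (iteratedDeriv n f) (Set.Ioi 0) := by
    intro y hy
    simp only [iteratedDerivWithin, iteratedDeriv, iteratedFDerivWithin_of_isOpen n ho hy]
  have h2 : DifferentiableWithinAt ℝ (iteratedDeriv n f) (Set.Ioi 0) x :=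
    (hd x hx).congr (fun y hy => (heq hy).symm) (heq hx).symm
  exact h2.differentiableAt (ho.mem_nhds hx)

lemma GB_hasDerivAt_iter {f : ℝ → ℝ} (hf : ContDiffOn ℝ (⊤ : ℕ∞) f (Set.Ioi 0)) (n : ℕ) {x : ℝ}
    (hx : 0 < x) : HasDerivAt (iteratedDeriv n f) (iteratedDeriv (n+1) f x) x := by
  have h' := (GB_diffAt_iter hf n hx).hasDerivAt
  simpa only [← iteratedDeriv_succ] using h'

/-- Monotonicity helper: nonnegative derivative on `(0, b]` gives `f a ≤ f b`. -/
lemma GB_le_of_hasDerivAt_nonneg {f f' : ℝ → ℝ} {a b : ℝ} (ha : 0 < a) (hab : a ≤ b)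
    (hf : ∀ x : ℝ, 0 < x → x ≤ b → HasDerivAt f (f' x) x)
    (h0 : ∀ x : ℝ, 0 < x → x ≤ b → 0 ≤ f' x) : f a ≤ f b := by
  have hmono : MonotoneOn f (Set.Icc a b) := by
    apply monotoneOn_of_deriv_nonneg (convex_Icc a b)
    · intro x hx
      exact ((hf x (lt_of_lt_of_le ha hx.1) hx.2).differentiableAt).continuousAt.continuousWithinAt
    · intro x hx
      rw [interior_Icc] at hx
      exact ((hf x (ha.trans hx.1) hx.2.le).differentiableAt).differentiableWithinAt
    · intro x hx
      rw [interior_Icc] at hx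
      rw [(hf x (ha.trans hx.1) hx.2.le).deriv]
      exact h0 x (ha.trans hx.1) hx.2.le
  exact hmono (Set.left_mem_Icc.2 hab) (Set.right_mem_Icc.2 hab) hab

/-- Key iterated identity: if `h x = x * F' x + lam * F x` on `(0,∞)`, then
`h⁽ⁿ⁾ x = x * F⁽ⁿ⁺¹⁾ x + (n + lam) * F⁽ⁿ⁾ x` there. -/
lemma GB_key {F h : ℝ → ℝ} {lam : ℝ} (hF : ContDiffOn ℝ (⊤ : ℕ∞) F (Set.Ioi 0))
    (hbase : ∀ x : ℝ, 0 < x → h x = x * deriv F x + lam * F x) :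
    ∀ n : ℕ, ∀ x : ℝ, 0 < x → iteratedDeriv n h x
      = x * iteratedDeriv (n+1) F x + ((n : ℝ) + lam) * iteratedDeriv n F x := by
  intro n
  induction n with
  | zero =>
    intro x hx
    simpa [iteratedDeriv_one, iteratedDeriv_zero] using hbase x hx
  | succ n IH =>
    intro x hx
    have hev : iteratedDeriv n h =ᶠ[nhds x]
        (fun y => y * iteratedDeriv (n+1) F y + ((n:ℝ) + lam) * iteratedDeriv n F y) :=
      Filter.eventuallyEq_of_mem (isOpen_Ioi.mem_nhds hx) (fun y hy => IH y hy)
    have hD1 := GB_hasDerivAt_iter hF (n+1) hx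
    have hD0 := GB_hasDerivAt_iter hF n hx
    have hR : HasDerivAt
        (fun y => y * iteratedDeriv (n+1) F y + ((n:ℝ) + lam) * iteratedDeriv n F y)
        (1 * iteratedDeriv (n+1) F x + x * iteratedDeriv (n+1+1) F x
          + ((n:ℝ) + lam) * iteratedDeriv (n+1) F x) x :=
      ((hasDerivAt_id x).mul hD1).add (hD0.const_mul _)
    have hstep : iteratedDeriv (n+1) h x
        = 1 * iteratedDeriv (n+1) F x + x * iteratedDeriv (n+1+1) F x
          + ((n:ℝ) + lam) * iteratedDeriv (n+1) F x := by
      rw [iteratedDeriv_succ, hev.deriv_eq, hR.deriv]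
    rw [hstep]
    push_cast
    ring

/-- Descent lemma: the bound `(-1)^n F⁽ⁿ⁾ x ≤ C - c x^(-(n+lam))` near `0` is impossible
for a nonnegative `F`. -/
lemma GB_descent {F : ℝ → ℝ} {lam : ℝ} (hlam : 0 < lam)
    (hF : ContDiffOn ℝ (⊤ : ℕ∞) F (Set.Ioi 0)) (hFpos : ∀ x : ℝ, 0 < x → 0 ≤ F x) :
    ∀ n : ℕ, ∀ C c x₀ : ℝ, 0 < c → 0 < x₀ →
      (∀ x : ℝ, 0 < x → x ≤ x₀ →
        (-1:ℝ)^n * iteratedDeriv n F x ≤ C - c * x ^ (-((n:ℝ) + lam))) → False := by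
  intro n
  induction n with
  | zero =>
    intro C c x₀ hc hx₀ hb
    set M := max C 0 + 1 with hM
    have hM0 : 0 < M := by positivity
    set r := (c / M) ^ (1 / lam) with hr
    have hr0 : 0 < r := Real.rpow_pos_of_pos (by positivity) _
    set x := min x₀ r with hxdef
    have hx0 : 0 < x := lt_min hx₀ hr0
    have hxlam : x ^ lam ≤ c / M := by
      have h1 : x ^ lam ≤ r ^ lam := Real.rpow_le_rpow hx0.le (min_le_right _ _) hlam.le
      have h2 : r ^ lam = c / M := by
        rw [hr, ← Real.rpow_mul (by positivity : (0:ℝ) ≤ c / M),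
          one_div_mul_cancel hlam.ne', Real.rpow_one]
      linarith
    have hxlampos : 0 < x ^ lam := Real.rpow_pos_of_pos hx0 lam
    have hinv : (c / M)⁻¹ ≤ (x ^ lam)⁻¹ := by
      exact inv_anti₀ hxlampos hxlam
    have hcx : M ≤ c * x ^ (-lam) := by
      rw [Real.rpow_neg hx0.le]
      have : c * (c / M)⁻¹ ≤ c * (x ^ lam)⁻¹ := by
        exact mul_le_mul_of_nonneg_left hinv hc.le
      have hcc : c * (c / M)⁻¹ = M := by field_simp
      linarith
    have hFx : 0 ≤ F x := hFpos x hx0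
    have hbx := hb x hx0 (min_le_left _ _)
    simp only [pow_zero, iteratedDeriv_zero, one_mul, Nat.cast_zero, zero_add] at hbx
    have hCM : C ≤ M - 1 := by
      have := le_max_left C 0
      simp only [hM]; linarith
    linarith
  | succ n IH =>
    intro C c x₀ hc hx₀ hb
    set p := (n:ℝ) + lam with hp_def
    have hp : 0 < p := by positivity
    set φ : ℝ → ℝ := fun y =>
      (-1:ℝ)^n * iteratedDeriv n F y + (c / p) * y ^ (-p) + C * y with hφ
    set φ' : ℝ → ℝ := fun y =>
      (-1:ℝ)^n * iteratedDeriv (n+1) F y + (c / p) * (-p * y ^ (-p - 1)) + C * 1 with hφ'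
    have hder : ∀ y : ℝ, 0 < y → y ≤ x₀ → HasDerivAt φ (φ' y) y := by
      intro y hy _
      exact (((GB_hasDerivAt_iter hF n hy).const_mul _).add
        ((Real.hasDerivAt_rpow_const (Or.inl hy.ne')).const_mul (c/p))).add
        ((hasDerivAt_id y).const_mul C)
    have hnn : ∀ y : ℝ, 0 < y → y ≤ x₀ → 0 ≤ φ' y := by
      intro y hy hyx₀
      have hby := hb y hy hyx₀
      have hexp : -(((n:ℕ)+1 : ℕ) + lam : ℝ) = -p - 1 := by push_cast; ring
      rw [hexp] at hby
      have hsign : ((-1:ℝ))^(n+1) * iteratedDeriv (n+1) F y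
          = -((-1:ℝ)^n * iteratedDeriv (n+1) F y) := by
        rw [pow_succ]; ring
      rw [hsign] at hby
      have hmc : (c / p) * (-p * y ^ (-p - 1)) = -(c * y ^ (-p - 1)) := by
        field_simp
      simp only [hφ']
      rw [hmc]
      linarith
    have hboundnew : ∀ x : ℝ, 0 < x → x ≤ x₀ →
        (-1:ℝ)^n * iteratedDeriv n F x ≤ (φ x₀ + |C| * x₀) - (c / p) * x ^ (-((n:ℝ) + lam)) := by
      intro x hx hxx₀
      have hφle : φ x ≤ φ x₀ := GB_le_of_hasDerivAt_nonneg hx hxx₀ hder hnn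
      have h1 : -(C * x) ≤ |C| * x₀ := by
        have h2 : -C ≤ |C| := neg_le_abs C
        have h3 : -C * x ≤ |C| * x := mul_le_mul_of_nonneg_right h2 hx.le
        have h4 : |C| * x ≤ |C| * x₀ := mul_le_mul_of_nonneg_left hxx₀ (abs_nonneg C)
        linarith
      simp only [hφ] at hφle
      rw [← hp_def]
      linarith
    exact IH (φ x₀ + |C| * x₀) (c / p) x₀ (by positivity) hx₀ hboundnew

theorem genBernstein_div_rpow_completelyMonotonic (lam : ℝ) (hlam : 0 < lam)
    (g : ℝ → ℝ) (hg : GenBernstein lam g) :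
    CompletelyMonotonic (fun x => g x / x ^ lam) := by
  obtain ⟨hg1, hg2, hh1, hh2⟩ : _ ∧ _ ∧ _ ∧ _ := hg
  set F : ℝ → ℝ := fun x => g x / x ^ lam with hFdef
  have hFs : ContDiffOn ℝ (⊤ : ℕ∞) F (Set.Ioi 0) := by
    intro x hx
    have h1 : ContDiffAt ℝ (⊤ : ℕ∞) (fun y : ℝ => y ^ lam) x :=
      Real.contDiffAt_rpow_const_of_ne (ne_of_gt hx)
    have h2 : ContDiffAt ℝ (⊤ : ℕ∞) g x := (hg1 x hx).contDiffAt (isOpen_Ioi.mem_nhds hx)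
    exact (h2.div h1 (ne_of_gt (Real.rpow_pos_of_pos hx lam))).contDiffWithinAt
  have hFpos : ∀ x : ℝ, 0 < x → 0 ≤ F x := fun x hx =>
    div_nonneg (hg2 x hx) (Real.rpow_pos_of_pos hx lam).le
  have hbase : ∀ x : ℝ, 0 < x →
      (fun x => x ^ (1 - lam) * deriv g x) x = x * deriv F x + lam * F x := by
    intro x hx
    have hgd : HasDerivAt g (deriv g x) x :=
      (((hg1 x hx).contDiffAt (isOpen_Ioi.mem_nhds hx)).differentiableAt (by simp)).hasDerivAt
    have hp : HasDerivAt (fun y : ℝ => y ^ lam) (lam * x ^ (lam - 1)) x :=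
      Real.hasDerivAt_rpow_const (Or.inl (ne_of_gt hx))
    have hA : (0:ℝ) < x ^ lam := Real.rpow_pos_of_pos hx lam
    have hFd : HasDerivAt F
        ((deriv g x * x ^ lam - g x * (lam * x ^ (lam - 1))) / (x ^ lam) ^ 2) x :=
      hgd.div hp (ne_of_gt hA)
    rw [hFd.deriv]
    have h1 : x ^ (1 - lam) * x ^ lam = x := by
      rw [← Real.rpow_add hx]; simp
    have h2 : x * x ^ (lam - 1) = x ^ lam := by
      nth_rewrite 1 [← Real.rpow_one x]
      rw [← Real.rpow_add hx]; ring_nf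
    simp only [hFdef]
    field_simp
    linear_combination (deriv g x * x ^ lam) * h1 + (lam * g x) * h2
  have hkey := GB_key hFs hbase
  refine ⟨hFs, ?_⟩
  intro n x hx
  by_contra hcon
  push_neg at hcon
  set p := (n:ℝ) + lam with hp_def
  have hp : 0 < p := by positivity
  set G : ℝ → ℝ := fun y => y ^ p * ((-1:ℝ)^n * iteratedDeriv n F y) with hG
  have hGder : ∀ y : ℝ, 0 < y → y ≤ x → HasDerivAt G
      ((p * y ^ (p-1)) * ((-1:ℝ)^n * iteratedDeriv n F y)
        + y ^ p * ((-1:ℝ)^n * iteratedDeriv (n+1) F y)) y := by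
    intro y hy _
    exact (Real.hasDerivAt_rpow_const (Or.inl hy.ne')).mul
      ((GB_hasDerivAt_iter hFs n hy).const_mul _)
  have hGnn : ∀ y : ℝ, 0 < y → y ≤ x →
      0 ≤ (p * y ^ (p-1)) * ((-1:ℝ)^n * iteratedDeriv n F y)
        + y ^ p * ((-1:ℝ)^n * iteratedDeriv (n+1) F y) := by
    intro y hy _
    have hyp : y ^ (p-1) * y = y ^ p := by
      rw [← Real.rpow_add_one hy.ne']; ring_nf
    have hk := hkey n y hy
    have he : (p * y ^ (p-1)) * ((-1:ℝ)^n * iteratedDeriv n F y)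
        + y ^ p * ((-1:ℝ)^n * iteratedDeriv (n+1) F y)
        = y ^ (p-1) * ((-1:ℝ)^n * iteratedDeriv n (fun x => x ^ (1-lam) * deriv g x) y) := by
      rw [hk, hp_def, ← hyp]; ring
    rw [he]
    exact mul_nonneg (Real.rpow_pos_of_pos hy _).le (hh2 n y hy)
  have hGx : G x < 0 := by
    simp only [hG]
    exact mul_neg_of_pos_of_neg (Real.rpow_pos_of_pos hx p) hcon
  set c : ℝ := -G x with hc_def
  have hc : 0 < c := by simp only [hc_def]; linarith
  have hbound : ∀ y : ℝ, 0 < y → y ≤ x →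
      (-1:ℝ)^n * iteratedDeriv n F y ≤ 0 - c * y ^ (-((n:ℝ) + lam)) := by
    intro y hy hyx
    have hGle : G y ≤ G x := GB_le_of_hasDerivAt_nonneg hy hyx hGder hGnn
    have hyp : (0:ℝ) < y ^ p := Real.rpow_pos_of_pos hy p
    have heq : (-1:ℝ)^n * iteratedDeriv n F y = (y ^ p)⁻¹ * G y := by
      simp only [hG]; field_simp
    have hle2 : (y ^ p)⁻¹ * G y ≤ (y ^ p)⁻¹ * G x :=
      mul_le_mul_of_nonneg_left hGle (inv_nonneg.2 hyp.le)
    have heq2 : (y ^ p)⁻¹ * G x = 0 - c * y ^ (-((n:ℝ) + lam)) := by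
      rw [← hp_def, Real.rpow_neg hy.le, hc_def]; ring
    rw [heq]
    linarith [heq2 ▸ hle2]
  exact GB_descent hlam hFs hFpos n 0 c x hc hx hbound
end
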